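/- arXiv:2208.01042 — 5 statements merged into one kernel-verified Lean document; each statement's English description precedes it below -/
import Mathlib

section
/- Let n ≥ 2. The distance Laplacian matrix of the star K_{1,n} (the co-centralizer graph of Q_{4n}) has eigenvalues 2n+1 with multiplicity n−1, n+1 with multiplicity 1, and 0 with multiplicity 1; equivalently, its characteristic polynomial is λ(λ−(n+1))(λ−(2n+1))^{n−1}. In particular, K_{1,n} is distance Laplacian integral. -/
open Polynomial

/-- The star graph `K_{1,n}` on `n+1` vertices. -/
def starGraph (n : ℕ) : SimpleGraph (Fin 1 ⊕ Fin n) :=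
  completeBipartiteGraph (Fin 1) (Fin n)

/-- The distance matrix of a graph. -/
noncomputable def distMatrix {V : Type*} [Fintype V] (G : SimpleGraph V) : Matrix V V ℝ :=
  Matrix.of fun u v => (G.dist u v : ℝ)

/-- The diagonal matrix of transmissions (sums of distances to all other vertices). -/
noncomputable def transMatrix {V : Type*} [Fintype V] [DecidableEq V] (G : SimpleGraph V) :
    Matrix V V ℝ :=
  Matrix.diagonal fun v => ∑ u, (G.dist v u : ℝ)

/-- The distance Laplacian matrix `D^L = Tr - D`. -/
noncomputable def distLapMatrix {V : Type*} [Fintype V] [DecidableEq V] (G : SimpleGraph V) :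
    Matrix V V ℝ :=
  transMatrix G - distMatrix G

section Sim
variable {ι : Type*} [Fintype ι] [DecidableEq ι]

lemma charpoly_similar (P Q M : Matrix ι ι ℝ) (h : P * Q = 1) :
    (P * M * Q).charpoly = M.charpoly := by
  have h1 : (P.map (C : ℝ →+* ℝ[X])) * (Q.map C) = 1 := by
    rw [← Matrix.map_mul, h, Matrix.map_one _ (map_zero _) (map_one _)]
  have key : Matrix.charmatrix (P * M * Q) =
      P.map C * Matrix.charmatrix M * Q.map C := by
    simp only [Matrix.charmatrix, Matrix.mul_sub, Matrix.sub_mul]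
    congr 1
    · have hd : (Matrix.diagonal fun _ : ι => (X : ℝ[X])) = (X : ℝ[X]) • (1 : Matrix ι ι ℝ[X]) := by
        rw [Matrix.smul_one_eq_diagonal]
      rw [Matrix.scalar_apply, hd, Matrix.mul_smul, Matrix.mul_one, Matrix.smul_mul, h1]
    · simp [RingHom.mapMatrix_apply, Matrix.map_mul]
  have hdet := congrArg Matrix.det h1
  rw [Matrix.det_mul, Matrix.det_one] at hdet
  rw [Matrix.charpoly, key, Matrix.det_mul, Matrix.det_mul, Matrix.charpoly]
  ring_nf
  rw [mul_comm, ← mul_assoc, mul_comm (Matrix.det (Q.map C)), hdet, one_mul]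

lemma charpoly_diag (d : ι → ℝ) :
    (Matrix.diagonal d).charpoly = ∏ i, (X - C (d i)) := by
  have h : Matrix.charmatrix (Matrix.diagonal d) = Matrix.diagonal fun i => X - C (d i) := by
    ext i j
    by_cases hij : i = j
    · subst hij; simp [Matrix.charmatrix_apply_eq]
    · rw [Matrix.charmatrix_apply_ne _ _ _ hij, Matrix.diagonal_apply_ne _ hij,
        Matrix.diagonal_apply_ne _ hij, map_zero, neg_zero]
  rw [Matrix.charpoly, h, Matrix.det_diagonal]
end Sim

section Star

lemma star_adj {n : ℕ} (a : Fin 1) (b : Fin n) : (starGraph n).Adj (Sum.inl a) (Sum.inr b) := by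
  simp [starGraph]

lemma star_dist_lr {n : ℕ} (a : Fin 1) (b : Fin n) :
    (starGraph n).dist (Sum.inl a) (Sum.inr b) = 1 :=
  SimpleGraph.dist_eq_one_iff_adj.mpr (star_adj a b)

lemma star_dist_rl {n : ℕ} (a : Fin 1) (b : Fin n) :
    (starGraph n).dist (Sum.inr b) (Sum.inl a) = 1 :=
  SimpleGraph.dist_eq_one_iff_adj.mpr (star_adj a b).symm

lemma star_dist_rr {n : ℕ} (j k : Fin n) (h : j ≠ k) :
    (starGraph n).dist (Sum.inr j) (Sum.inr k) = 2 := by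
  have hw : ((star_adj 0 j).symm.toWalk.append (star_adj 0 k).toWalk).length = 2 := by
    simp
  have hle : (starGraph n).dist (Sum.inr j) (Sum.inr k) ≤ 2 := by
    rw [← hw]; exact SimpleGraph.dist_le _
  have h0 : (starGraph n).dist (Sum.inr j) (Sum.inr k) ≠ 0 := by
    have hr : (starGraph n).Reachable (Sum.inr j) (Sum.inr k) :=
      ⟨(star_adj 0 j).symm.toWalk.append (star_adj 0 k).toWalk⟩
    have := hr.pos_dist_of_ne (by simpa using h)
    omega
  have h1 : (starGraph n).dist (Sum.inr j) (Sum.inr k) ≠ 1 := by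
    rw [Ne, SimpleGraph.dist_eq_one_iff_adj]
    simp [starGraph]
  omega

lemma star_dist_ll {n : ℕ} (a b : Fin 1) :
    (starGraph n).dist (Sum.inl a) (Sum.inl b) = 0 := by
  have : a = b := Subsingleton.elim a b
  subst this; simp

/-- The explicit distance Laplacian of the star. -/
noncomputable def Lm (n : ℕ) : Matrix (Fin 1 ⊕ Fin n) (Fin 1 ⊕ Fin n) ℝ :=
  Matrix.of fun u v => match u, v with
  | Sum.inl _, Sum.inl _ => (n : ℝ)
  | Sum.inl _, Sum.inr _ => -1
  | Sum.inr _, Sum.inl _ => -1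
  | Sum.inr j, Sum.inr k => -2 + (if j = k then 2 * (n : ℝ) + 1 else 0)

/-- Eigenvector matrix. -/
noncomputable def Pm (n : ℕ) [NeZero n] : Matrix (Fin 1 ⊕ Fin n) (Fin 1 ⊕ Fin n) ℝ :=
  Matrix.of fun u v => match u, v with
  | Sum.inl _, Sum.inl _ => 1
  | Sum.inl _, Sum.inr k => if k = 0 then (n : ℝ) else 0
  | Sum.inr _, Sum.inl _ => 1
  | Sum.inr j, Sum.inr k =>
      if k = 0 then -1 else (if j = k then 1 else 0) - (if j = 0 then 1 else 0)

/-- Inverse of the eigenvector matrix. -/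
noncomputable def Qm (n : ℕ) [NeZero n] : Matrix (Fin 1 ⊕ Fin n) (Fin 1 ⊕ Fin n) ℝ :=
  Matrix.of fun u v => match u, v with
  | Sum.inl _, Sum.inl _ => 1 / ((n : ℝ) + 1)
  | Sum.inl _, Sum.inr _ => 1 / ((n : ℝ) + 1)
  | Sum.inr j, Sum.inl _ => if j = 0 then (1 : ℝ) / ((n : ℝ) + 1) else 0
  | Sum.inr j, Sum.inr k =>
      if j = 0 then -1 / ((n : ℝ) * ((n : ℝ) + 1))
      else (if j = k then 1 else 0) - 1 / (n : ℝ)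

/-- The diagonal eigenvalue function. -/
noncomputable def dg (n : ℕ) [NeZero n] : Fin 1 ⊕ Fin n → ℝ :=
  fun v => match v with
  | Sum.inl _ => 0
  | Sum.inr k => if k = 0 then (n : ℝ) + 1 else 2 * (n : ℝ) + 1

lemma distLap_star_eq (n : ℕ) (hn : 1 ≤ n) : distLapMatrix (starGraph n) = Lm n := by
  have hsum : ∀ j : Fin n, ∑ k, ((starGraph n).dist (Sum.inr j) (Sum.inr k) : ℝ)
      = 2 * (n : ℝ) - 2 := by
    intro j
    have hterm : ∀ k : Fin n, ((starGraph n).dist (Sum.inr j) (Sum.inr k) : ℝ)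
        = 2 - (if j = k then 2 else 0) := by
      intro k
      by_cases h : j = k
      · subst h; simp
      · rw [star_dist_rr _ _ h]; simp [h]
    rw [Finset.sum_congr rfl fun k _ => hterm k, Finset.sum_sub_distrib, Finset.sum_const,
      Finset.sum_ite_eq]
    simp
    ring
  ext u v
  simp only [distLapMatrix, transMatrix, distMatrix, Matrix.sub_apply]
  match u, v with
  | Sum.inl a, Sum.inl b =>
    have hab : a = b := Subsingleton.elim a b
    subst hab
    rw [Matrix.diagonal_apply_eq]
    rw [Fintype.sum_sum_type]
    simp [star_dist_ll, star_dist_lr, Lm]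
  | Sum.inl a, Sum.inr b =>
    rw [Matrix.diagonal_apply_ne _ (by simp)]
    simp [star_dist_lr, Lm]
  | Sum.inr a, Sum.inl b =>
    rw [Matrix.diagonal_apply_ne _ (by simp)]
    simp [star_dist_rl, Lm]
  | Sum.inr a, Sum.inr b =>
    by_cases hab : a = b
    · subst hab
      rw [Matrix.diagonal_apply_eq, Fintype.sum_sum_type]
      simp [star_dist_rl, hsum, Lm, SimpleGraph.dist_self]
      ring
    · rw [Matrix.diagonal_apply_ne _ (by simp [hab])]
      simp only [Matrix.of_apply, Lm, star_dist_rr _ _ hab, hab]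
      norm_num

lemma QP_eq_one (n : ℕ) [NeZero n] : Qm n * Pm n = 1 := by
  have hN : (n : ℝ) ≠ 0 := Nat.cast_ne_zero.mpr (NeZero.ne n)
  have hN1 : (n : ℝ) + 1 ≠ 0 := by positivity
  ext u v
  rw [Matrix.mul_apply, Fintype.sum_sum_type]
  match u, v with
  | Sum.inl a, Sum.inl b =>
    have hab : a = b := Subsingleton.elim a b
    subst hab
    simp only [Qm, Pm, Matrix.of_apply, Fin.sum_univ_one, Matrix.one_apply_eq,
      Finset.sum_const, Finset.card_univ, Fintype.card_fin, mul_one, nsmul_eq_mul]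
    field_simp
    ring
  | Sum.inl a, Sum.inr k =>
    rw [Matrix.one_apply_ne (by simp)]
    by_cases hk : k = 0 <;>
    · simp only [Qm, Pm, Matrix.of_apply, Fin.sum_univ_one, hk, ite_mul, mul_ite,
        mul_sub, sub_mul, mul_one, mul_zero, mul_neg, zero_mul, Finset.sum_sub_distrib,
        Finset.sum_ite_eq, Finset.sum_ite_eq', Finset.sum_const, Finset.card_univ,
        Fintype.card_fin, nsmul_eq_mul, Finset.mem_univ, if_true, Finset.sum_neg_distrib,
        ite_false, ite_true, if_false, if_true]
      first
      | (simp [Ne.symm hk]; (try field_simp); (try ring1); done)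
      | (field_simp; (try ring1); done)
  | Sum.inr j, Sum.inl b =>
    rw [Matrix.one_apply_ne (by simp)]
    by_cases hj : j = 0 <;>
    · simp only [Qm, Pm, Matrix.of_apply, Fin.sum_univ_one, hj, ite_mul, mul_ite,
        mul_sub, sub_mul, mul_one, mul_zero, mul_neg, zero_mul, Finset.sum_sub_distrib,
        Finset.sum_ite_eq, Finset.sum_ite_eq', Finset.sum_const, Finset.card_univ,
        Fintype.card_fin, nsmul_eq_mul, Finset.mem_univ, if_true, zero_add,
        ite_false, ite_true, if_false, if_true]
      first
      | (simp [Ne.symm hj]; (try field_simp); (try ring1); done)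
      | (field_simp; (try ring1); done)
  | Sum.inr j, Sum.inr k =>
    have hone : (1 : Matrix (Fin 1 ⊕ Fin n) (Fin 1 ⊕ Fin n) ℝ) (Sum.inr j) (Sum.inr k)
        = if j = k then 1 else 0 := by
      by_cases h : j = k
      · subst h; simp
      · rw [Matrix.one_apply_ne (by simp [h]), if_neg h]
    rw [hone]
    by_cases hj : j = 0 <;> by_cases hk : k = 0 <;>
    · simp only [Qm, Pm, Matrix.of_apply, Fin.sum_univ_one, hj, hk, ite_mul,
        mul_ite, mul_sub, sub_mul, mul_one, mul_zero, mul_neg, zero_mul, neg_mul,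
        Finset.sum_sub_distrib, Finset.sum_neg_distrib,
        Finset.sum_ite_eq, Finset.sum_ite_eq', Finset.sum_const, Finset.card_univ,
        Fintype.card_fin, nsmul_eq_mul, Finset.mem_univ, if_true, zero_add, neg_neg,
        ite_false, ite_true, if_false, if_true]
      first
      | (simp [Ne.symm hk]; (try field_simp); (try ring1); done)
      | (simp [Ne.symm hj]; (try field_simp); (try ring1); done)
      | (field_simp; (try ring1); done)
      | (by_cases hjk : j = k <;> simp [hjk] <;> (try field_simp) <;> (try ring1); done)
      | (split <;> simp_all)

lemma LP_eq_PD (n : ℕ) [NeZero n] : Lm n * Pm n = Pm n * Matrix.diagonal (dg n) := by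
  ext u v
  rw [Matrix.mul_apply, Fintype.sum_sum_type, Matrix.mul_diagonal]
  match u, v with
  | Sum.inl a, Sum.inl b =>
    have hab : a = b := Subsingleton.elim a b
    subst hab
    simp [Lm, Pm, dg]
  | Sum.inl a, Sum.inr k =>
    by_cases hk : k = 0 <;>
    · simp only [Lm, Pm, dg, Matrix.of_apply, Fin.sum_univ_one, hk, ite_mul, mul_ite,
        mul_sub, sub_mul, add_mul, mul_add, mul_one, mul_zero, mul_neg, zero_mul, neg_mul,
        Finset.sum_add_distrib, Finset.sum_sub_distrib, Finset.sum_neg_distrib,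
        Finset.sum_ite_eq, Finset.sum_ite_eq', Finset.sum_const, Finset.card_univ,
        Fintype.card_fin, nsmul_eq_mul, Finset.mem_univ, if_true, zero_add, neg_neg,
        ite_false, ite_true, if_false, if_true]
      first
      | (simp [Ne.symm hk]; (try field_simp); (try ring1); done)
      | (field_simp; (try ring1); done)
      | ring1
  | Sum.inr j, Sum.inl b =>
    by_cases hj : j = 0 <;>
    · simp only [Lm, Pm, dg, Matrix.of_apply, Fin.sum_univ_one, hj, ite_mul, mul_ite,
        mul_sub, sub_mul, add_mul, mul_add, mul_one, mul_zero, mul_neg, zero_mul, neg_mul,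
        Finset.sum_add_distrib, Finset.sum_sub_distrib, Finset.sum_neg_distrib,
        Finset.sum_ite_eq, Finset.sum_ite_eq', Finset.sum_const, Finset.card_univ,
        Fintype.card_fin, nsmul_eq_mul, Finset.mem_univ, if_true, zero_add, neg_neg,
        ite_false, ite_true, if_false, if_true]
      first
      | (simp [Ne.symm hj]; (try field_simp); (try ring1); done)
      | (field_simp; (try ring1); done)
      | ring1
  | Sum.inr j, Sum.inr k =>
    by_cases hj : j = 0 <;> by_cases hk : k = 0 <;>
    · simp only [Lm, Pm, dg, Matrix.of_apply, Fin.sum_univ_one, hj, hk, ite_mul, mul_ite,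
        mul_sub, sub_mul, add_mul, mul_add, mul_one, mul_zero, mul_neg, zero_mul, neg_mul,
        Finset.sum_add_distrib, Finset.sum_sub_distrib, Finset.sum_neg_distrib,
        Finset.sum_ite_eq, Finset.sum_ite_eq', Finset.sum_const, Finset.card_univ,
        Fintype.card_fin, nsmul_eq_mul, Finset.mem_univ, if_true, zero_add, neg_neg,
        ite_false, ite_true, if_false, if_true]
      first
      | (simp [Ne.symm hk]; (try field_simp); (try ring1); done)
      | (simp [Ne.symm hj]; (try field_simp); (try ring1); done)
      | (field_simp; (try ring1); done)
      | ring1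
      | (by_cases hjk : j = k <;> simp [hjk] <;> (try field_simp) <;> (try ring1); done)
      | (split <;> simp_all <;> (try ring1); done)

end Star

theorem star_distance_laplacian_spectrum (n : ℕ) (hn : 2 ≤ n) :
    (distLapMatrix (starGraph n)).charpoly =
      X * (X - C ((n : ℝ) + 1)) * (X - C (2 * (n : ℝ) + 1)) ^ (n - 1) ∧
    (distLapMatrix (starGraph n)).charpoly.rootMultiplicity (2 * (n : ℝ) + 1) = n - 1 ∧
    (distLapMatrix (starGraph n)).charpoly.rootMultiplicity ((n : ℝ) + 1) = 1 ∧
    (distLapMatrix (starGraph n)).charpoly.rootMultiplicity 0 = 1 ∧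
    ∀ μ : ℝ, (distLapMatrix (starGraph n)).charpoly.IsRoot μ → ∃ z : ℤ, μ = z := by
  haveI : NeZero n := ⟨by omega⟩
  have hn2 : (2 : ℝ) ≤ (n : ℝ) := by exact_mod_cast hn
  have hPQ : Pm n * Qm n = 1 := mul_eq_one_comm.mp (QP_eq_one n)
  have hL : distLapMatrix (starGraph n) = Pm n * Matrix.diagonal (dg n) * Qm n := by
    rw [distLap_star_eq n (by omega)]
    calc Lm n = Lm n * (Pm n * Qm n) := by rw [hPQ, Matrix.mul_one]
    _ = (Lm n * Pm n) * Qm n := by rw [Matrix.mul_assoc]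
    _ = (Pm n * Matrix.diagonal (dg n)) * Qm n := by rw [LP_eq_PD]
  have hcp : (distLapMatrix (starGraph n)).charpoly =
      X * (X - C ((n : ℝ) + 1)) * (X - C (2 * (n : ℝ) + 1)) ^ (n - 1) := by
    rw [hL, charpoly_similar _ _ _ hPQ, charpoly_diag, Fintype.prod_sum_type]
    have h1 : ∏ a : Fin 1, (X - C (dg n (Sum.inl a))) = X := by
      simp [dg]
    have h2 : ∏ k : Fin n, (X - C (dg n (Sum.inr k)))
        = (X - C ((n : ℝ) + 1)) * (X - C (2 * (n : ℝ) + 1)) ^ (n - 1) := by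
      have h0 : dg n (Sum.inr (0 : Fin n)) = (n : ℝ) + 1 := by simp [dg]
      have h3 : ∏ x ∈ Finset.univ.erase (0 : Fin n), (X - C (dg n (Sum.inr x)))
          = ∏ _x ∈ Finset.univ.erase (0 : Fin n), (X - C (2 * (n : ℝ) + 1)) :=
        Finset.prod_congr rfl (fun k hk => by
          rw [show dg n (Sum.inr k) = 2 * (n : ℝ) + 1 from by
            simp [dg, (Finset.mem_erase.mp hk).1]])
      rw [← Finset.mul_prod_erase Finset.univ _ (Finset.mem_univ (0 : Fin n)), h0, h3,
        Finset.prod_const, Finset.card_erase_of_mem (Finset.mem_univ _), Finset.card_univ,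
        Fintype.card_fin]
    rw [h1, h2]
    ring
  have hXne : (X : ℝ[X]) ≠ 0 := X_ne_zero
  have hAne : (X - C ((n : ℝ) + 1)) ≠ 0 := X_sub_C_ne_zero _
  have hBne : (X - C (2 * (n : ℝ) + 1)) ^ (n - 1) ≠ 0 := pow_ne_zero _ (X_sub_C_ne_zero _)
  have hprod1 : (X : ℝ[X]) * (X - C ((n : ℝ) + 1)) ≠ 0 := mul_ne_zero hXne hAne
  have hprod : (X : ℝ[X]) * (X - C ((n : ℝ) + 1)) * (X - C (2 * (n : ℝ) + 1)) ^ (n - 1) ≠ 0 :=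
    mul_ne_zero hprod1 hBne
  have hXeq : (X : ℝ[X]) = X - C 0 := by rw [map_zero, sub_zero]
  have hrm : ∀ x : ℝ, (distLapMatrix (starGraph n)).charpoly.rootMultiplicity x
      = (if x = 0 then 1 else 0) + (if x = (n : ℝ) + 1 then 1 else 0)
        + (n - 1) * (if x = 2 * (n : ℝ) + 1 then 1 else 0) := by
    intro x
    rw [hcp, Polynomial.rootMultiplicity_mul hprod, Polynomial.rootMultiplicity_mul hprod1]
    congr 1
    · congr 1
      · rw [hXeq, Polynomial.rootMultiplicity_X_sub_C]
      · rw [Polynomial.rootMultiplicity_X_sub_C]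
    · by_cases hx : x = 2 * (n : ℝ) + 1
      · subst hx
        rw [Polynomial.rootMultiplicity_X_sub_C_pow, if_pos rfl, mul_one]
      · rw [if_neg hx, mul_zero, Polynomial.rootMultiplicity_eq_zero]
        intro hroot
        apply hx
        have := hroot
        simp only [Polynomial.IsRoot, Polynomial.eval_pow, Polynomial.eval_sub,
          Polynomial.eval_X, Polynomial.eval_C] at this
        have h2 := pow_eq_zero_iff (n := n - 1) (by omega) |>.mp this
        linarith [sub_eq_zero.mp h2]
  refine ⟨hcp, ?_, ?_, ?_, ?_⟩
  · rw [hrm]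
    rw [if_neg (by nlinarith), if_neg (by nlinarith), if_pos rfl]
    ring
  · rw [hrm]
    rw [if_neg (by nlinarith), if_pos rfl, if_neg (by nlinarith)]
    ring
  · rw [hrm]
    rw [if_pos rfl, if_neg (by nlinarith), if_neg (by nlinarith)]
    ring
  · intro μ hroot
    rw [hcp] at hroot
    have h := hroot
    simp only [Polynomial.IsRoot.def, Polynomial.eval_mul, Polynomial.eval_pow,
      Polynomial.eval_sub, Polynomial.eval_X, Polynomial.eval_C] at h
    rcases mul_eq_zero.mp h with h1 | h2
    · rcases mul_eq_zero.mp h1 with h3 | h4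
      · exact ⟨0, by simpa using h3⟩
      · exact ⟨(n : ℤ) + 1, by push_cast; linarith [sub_eq_zero.mp h4]⟩
    · have h5 : μ - (2 * (n : ℝ) + 1) = 0 :=
        pow_eq_zero_iff (by omega : n - 1 ≠ 0) |>.mp h2
      exact ⟨2 * (n : ℤ) + 1, by push_cast; linarith [sub_eq_zero.mp h5]⟩
end

section
/- Let n ≥ 2. The distance signless Laplacian matrix of the star K_{1,n} (the co-centralizer graph of Q_{4n}) has eigenvalues 2n−3 with multiplicity n−1 and ((5n−3) ± √(9n²−14n+9))/2 each with multiplicity 1; equivalently, its characteristic polynomial is (λ−(2n−3))^{n−1}(λ² − (5n−3)λ + 4n²−4n). -/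
open Polynomial

/-- The distance signless Laplacian matrix `D^Q = Tr + D`. -/
noncomputable def distSignlessLapMatrix {V : Type*} [Fintype V] [DecidableEq V]
    (G : SimpleGraph V) : Matrix V V ℝ :=
  transMatrix G + distMatrix G

/-!
With the centre listed first, `D^Q(K_{1,n})` is the block matrix `[[n, 𝟙ᵀ], [𝟙, (2n-3)I + 2J]]`.
For `x ≠ n, 2n-3` the Schur complement of the `1 × 1` block of `xI - D^Q` is
`(x - 2n + 3)I - (2 + (x - n)⁻¹)J`, whose determinant the matrix determinant lemma gives; this
pins down the characteristic polynomial at infinitely many points. The quadratic factor takes the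
value `n(5 - 2n) ≠ 0` at `2n - 3`, so the three roots are distinct and the multiplicities can be
read off the factorisation.
-/

namespace SimpleGraph

variable {V W : Type*}

theorem completeBipartiteGraph_dist_inl_inr (v : V) (w : W) :
    (completeBipartiteGraph V W).dist (.inl v) (.inr w) = 1 :=
  dist_eq_one_iff_adj.2 (by simp)

theorem completeBipartiteGraph_dist_inr_inr [Nonempty V] [DecidableEq W] (w w' : W) :
    (completeBipartiteGraph V W).dist (.inr w) (.inr w') = if w = w' then 0 else 2 := by
  split_ifs with h
  · simp [h]
  obtain ⟨v⟩ := ‹Nonempty V›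
  have : (completeBipartiteGraph V W).edist (.inr w) (.inr w') = 2 :=
    edist_eq_two_iff.2 ⟨by simpa using h, by simp, ⟨.inl v, by simp [mem_commonNeighbors]⟩⟩
  simp [dist, this]

end SimpleGraph

namespace Matrix

theorem det_smul_one_add_of_const {K ι : Type*} [Field K] [Fintype ι] [DecidableEq ι]
    [Nonempty ι] {a : K} (ha : a ≠ 0) (b : K) :
    (a • (1 : Matrix ι ι K) + of fun _ _ => b).det =
      a ^ (Fintype.card ι - 1) * (a + Fintype.card ι * b) := by
  have hrank_one : (a • (1 : Matrix ι ι K) + of fun _ _ => b) =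
      a • (1 + replicateCol Unit (fun _ : ι => b / a) * replicateRow Unit (1 : ι → K)) := by
    ext i j
    simp [one_apply, mul_add, mul_apply, mul_div_cancel₀ _ ha]
  rw [hrank_one, det_smul, det_one_add_replicateCol_mul_replicateRow]
  obtain ⟨k, hk⟩ := Nat.exists_eq_succ_of_ne_zero (Fintype.card_ne_zero (α := ι))
  simp [dotProduct, hk, pow_succ]
  field_simp

end Matrix

namespace Polynomial

theorem rootMultiplicity_X_sub_C_pow_mul_X_sub_C_mul_X_sub_C {R : Type*} [CommRing R]
    [IsDomain R] [DecidableEq R] (x a b c : R) (k : ℕ) :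
    rootMultiplicity x ((X - C a) ^ k * ((X - C b) * (X - C c))) =
      (if x = a then k else 0) + (if x = b then 1 else 0) + (if x = c then 1 else 0) := by
  have hne : (X - C a) ^ k * ((X - C b) * (X - C c)) ≠ 0 := by simp [X_sub_C_ne_zero]
  rw [← count_roots, roots_mul hne, roots_mul (right_ne_zero_of_mul hne), roots_pow]
  simp only [roots_X_sub_C, Multiset.count_add, Multiset.count_nsmul, Multiset.count_singleton]
  split_ifs <;> simp

theorem X_sq_sub_C_mul_X_add_C_eq {s p : ℝ} (h : 0 ≤ s ^ 2 - 4 * p) :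
    (X ^ 2 - C s * X + C p : ℝ[X]) =
      (X - C ((s + √(s ^ 2 - 4 * p)) / 2)) * (X - C ((s - √(s ^ 2 - 4 * p)) / 2)) := by
  have hsq := Real.sq_sqrt h
  set d := √(s ^ 2 - 4 * p)
  have hsum : (s + d) / 2 + (s - d) / 2 = s := by ring
  have hprod : (s + d) / 2 * ((s - d) / 2) = p := by linear_combination (-1 / 4 : ℝ) * hsq
  conv_lhs => rw [← hsum, ← hprod]
  simp only [C_add, C_mul]
  ring

end Polynomial

open SimpleGraph (completeBipartiteGraph_dist_inl_inr completeBipartiteGraph_dist_inr_inr)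
open Matrix

theorem sum_starGraph_dist_inl (n : ℕ) (a : Fin 1) :
    ∑ u, ((starGraph n).dist (.inl a) u : ℝ) = n := by
  simp [starGraph, Fintype.sum_sum_type, completeBipartiteGraph_dist_inl_inr,
    Subsingleton.elim a 0]

theorem sum_starGraph_dist_inr (n : ℕ) (i : Fin n) :
    ∑ u, ((starGraph n).dist (.inr i) u : ℝ) = 2 * n - 1 := by
  simp [starGraph, Fintype.sum_sum_type, SimpleGraph.dist_comm (u := Sum.inr i),
    completeBipartiteGraph_dist_inl_inr, completeBipartiteGraph_dist_inr_inr, Finset.sum_ite,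
    Finset.filter_ne', Nat.cast_pred i.pos]
  ring

theorem distSignlessLapMatrix_starGraph (n : ℕ) :
    distSignlessLapMatrix (starGraph n) =
      fromBlocks (of fun _ _ => (n : ℝ)) (of fun _ _ => 1) (of fun _ _ => 1)
        ((2 * n - 3 : ℝ) • 1 + of fun _ _ => 2) := by
  ext (a | i) (b | j) <;>
    simp only [distSignlessLapMatrix, transMatrix, distMatrix, Matrix.add_apply, diagonal_apply,
      of_apply, fromBlocks_apply₁₁, fromBlocks_apply₁₂, fromBlocks_apply₂₁, fromBlocks_apply₂₂,
      Sum.inl.injEq, Sum.inr.injEq, reduceCtorEq, if_false, zero_add]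
  · obtain rfl := Subsingleton.elim a b
    rw [if_pos rfl, sum_starGraph_dist_inl, SimpleGraph.dist_self]
    simp
  · simp [starGraph, completeBipartiteGraph_dist_inl_inr]
  · simp [starGraph, SimpleGraph.dist_comm (u := Sum.inr i), completeBipartiteGraph_dist_inl_inr]
  · by_cases h : i = j
    · subst h
      rw [if_pos rfl, sum_starGraph_dist_inr, SimpleGraph.dist_self]
      simp
      ring
    · simp [h, starGraph, completeBipartiteGraph_dist_inr_inr]

theorem det_scalar_sub_distSignlessLapMatrix_starGraph {n : ℕ} (hn : 0 < n) {x : ℝ}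
    (hxn : x ≠ n) (hxc : x ≠ 2 * n - 3) :
    (scalar _ x - distSignlessLapMatrix (starGraph n)).det =
      (x - (2 * n - 3)) ^ (n - 1) * (x ^ 2 - (5 * n - 3) * x + (4 * n ^ 2 - 4 * n)) := by
  have : Nonempty (Fin n) := Fin.pos_iff_nonempty.1 hn
  have hxn' : x - n ≠ 0 := sub_ne_zero.2 hxn
  have hxc' : x - (2 * n - 3) ≠ 0 := sub_ne_zero.2 hxc
  let A : Matrix (Fin 1) (Fin 1) ℝ := of fun _ _ => x - n
  let : Invertible A := ⟨of fun _ _ => (x - n)⁻¹,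
    by ext i j; simp [A, mul_apply, one_apply, Subsingleton.elim i j, hxn'],
    by ext i j; simp [A, mul_apply, one_apply, Subsingleton.elim i j, hxn']⟩
  have hblocks : scalar _ x - distSignlessLapMatrix (starGraph n) =
      fromBlocks A (of fun _ _ => -1) (of fun _ _ => -1)
        ((x - (2 * n - 3)) • 1 + of fun _ _ => -2) := by
    rw [distSignlessLapMatrix_starGraph]
    ext (a | i) (b | j)
    · simp [A, Subsingleton.elim a b]
    · simp
    · simp
    · by_cases h : i = j <;> simp [h, one_apply]
      ring
  have hschur : (of fun _ _ => -2 : Matrix (Fin n) (Fin n) ℝ) -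
      (of fun _ _ => -1 : Matrix (Fin n) (Fin 1) ℝ) * ⅟A *
        (of fun _ _ => -1 : Matrix (Fin 1) (Fin n) ℝ) =
      of fun _ _ => -2 - (x - n)⁻¹ := by
    ext
    simp [A, mul_apply]
  rw [hblocks, det_fromBlocks₁₁, add_sub_assoc, hschur, det_smul_one_add_of_const hxc',
    Fintype.card_fin]
  simp [A]
  field_simp
  ring

theorem charpoly_distSignlessLapMatrix_starGraph {n : ℕ} (hn : 0 < n) :
    (distSignlessLapMatrix (starGraph n)).charpoly =
      (X - C (2 * (n : ℝ) - 3)) ^ (n - 1) *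
        (X ^ 2 - C (5 * (n : ℝ) - 3) * X + C (4 * (n : ℝ) ^ 2 - 4 * n)) := by
  refine eq_of_infinite_eval_eq _ _ <|
    (Set.toFinite ({(n : ℝ), 2 * (n : ℝ) - 3} : Set ℝ)).infinite_compl.mono fun x hx => ?_
  simp only [Set.mem_compl_iff, Set.mem_insert_iff, Set.mem_singleton_iff, not_or] at hx
  rw [Set.mem_ofPred_eq, eval_charpoly,
    det_scalar_sub_distSignlessLapMatrix_starGraph hn hx.1 hx.2]
  simp

theorem star_distance_signless_laplacian_spectrum (n : ℕ) (hn : 2 ≤ n) :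
    (distSignlessLapMatrix (starGraph n)).charpoly =
      (X - C (2 * (n : ℝ) - 3)) ^ (n - 1) *
        (X ^ 2 - C (5 * (n : ℝ) - 3) * X + C (4 * (n : ℝ) ^ 2 - 4 * n)) ∧
    (distSignlessLapMatrix (starGraph n)).charpoly.rootMultiplicity (2 * (n : ℝ) - 3) = n - 1 ∧
    (distSignlessLapMatrix (starGraph n)).charpoly.rootMultiplicity
      (((5 * (n : ℝ) - 3) + Real.sqrt (9 * (n : ℝ) ^ 2 - 14 * n + 9)) / 2) = 1 ∧
    (distSignlessLapMatrix (starGraph n)).charpoly.rootMultiplicity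
      (((5 * (n : ℝ) - 3) - Real.sqrt (9 * (n : ℝ) ^ 2 - 14 * n + 9)) / 2) = 1 := by
  have hchar := charpoly_distSignlessLapMatrix_starGraph (by omega : 0 < n)
  have hquad := X_sq_sub_C_mul_X_add_C_eq (s := 5 * (n : ℝ) - 3) (p := 4 * (n : ℝ) ^ 2 - 4 * n)
    (by nlinarith)
  rw [show (5 * (n : ℝ) - 3) ^ 2 - 4 * (4 * n ^ 2 - 4 * n) = 9 * n ^ 2 - 14 * n + 9 by ring]
    at hquad
  set c : ℝ := 2 * n - 3
  set r₁ := ((5 * (n : ℝ) - 3) + √(9 * (n : ℝ) ^ 2 - 14 * n + 9)) / 2 with hr₁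
  set r₂ := ((5 * (n : ℝ) - 3) - √(9 * (n : ℝ) ^ 2 - 14 * n + 9)) / 2 with hr₂
  have hc : (c - r₁) * (c - r₂) ≠ 0 := by
    have heval := congrArg (eval c) hquad
    simp only [eval_add, eval_sub, eval_mul, eval_pow, eval_X, eval_C] at heval
    have h5 : (5 : ℝ) ≠ 2 * n := by norm_cast; omega
    rw [← heval, show c ^ 2 - (5 * n - 3) * c + (4 * n ^ 2 - 4 * n) = n * (5 - 2 * n) by ring]
    exact mul_ne_zero (by positivity) (sub_ne_zero.2 h5)
  have hr : r₁ ≠ r₂ := by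
    rw [hr₁, hr₂]
    intro h
    linarith [Real.sqrt_pos.2 (by nlinarith [sq_nonneg (3 * (n : ℝ) - 7 / 3)] :
      0 < 9 * (n : ℝ) ^ 2 - 14 * n + 9)]
  have hcr₁ : c ≠ r₁ := sub_ne_zero.1 (left_ne_zero_of_mul hc)
  have hcr₂ : c ≠ r₂ := sub_ne_zero.1 (right_ne_zero_of_mul hc)
  refine ⟨hchar, ?_, ?_, ?_⟩ <;>
    rw [hchar, hquad, rootMultiplicity_X_sub_C_pow_mul_X_sub_C_mul_X_sub_C] <;>
    simp [hcr₁, hcr₂, hr, hcr₁.symm, hcr₂.symm, hr.symm]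
end

section
/- Let n ≥ 4. The quasidihedral group QD_{2^n} has exactly 2^{n-2} + 1 distinct proper centralizers of elements, one of cardinality 2^{n-1} and the remaining 2^{n-2} of cardinality 4, and consequently the co-centralizer graph of QD_{2^n} is isomorphic to the star K_{1,2^{n-2}}. -/
/-- Relators of the quasidihedral group
`⟨a, b : a^(2^(n-1)) = b^2 = 1, b a b⁻¹ = a^(2^(n-2) - 1)⟩`. -/
def qdRels (n : ℕ) : Set (FreeGroup (Fin 2)) :=
  {FreeGroup.of 0 ^ 2 ^ (n - 1), FreeGroup.of 1 ^ 2,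
    FreeGroup.of 1 * FreeGroup.of 0 * (FreeGroup.of 1)⁻¹ *
      (FreeGroup.of 0 ^ (2 ^ (n - 2) - 1))⁻¹}

/-- The quasidihedral group of order `2^n`. -/
abbrev QuasidihedralGroup (n : ℕ) : Type := PresentedGroup (qdRels n)

/-- A subgroup is a proper centralizer if it is proper and is the centralizer of some element. -/
def IsProperCentralizer {G : Type*} [Group G] (H : Subgroup G) : Prop :=
  H ≠ ⊤ ∧ ∃ x : G, H = Subgroup.centralizer {x}

/-- The centralizer graph: vertices are the proper centralizers of elements, two distinct
vertices adjacent iff they have the same cardinality. -/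
def centralizerGraph (G : Type*) [Group G] :
    SimpleGraph {H : Subgroup G // IsProperCentralizer H} where
  Adj A B := A ≠ B ∧ Nat.card A.1 = Nat.card B.1
  symm := ⟨fun _ _ h => ⟨h.1.symm, h.2.symm⟩⟩
  loopless := ⟨fun _ h => h.1 rfl⟩

/-- The co-centralizer graph is the complement of the centralizer graph. -/
def cocentralizerGraph (G : Type*) [Group G] :
    SimpleGraph {H : Subgroup G // IsProperCentralizer H} :=
  (centralizerGraph G)ᶜ

/-! `QD_{2^n}` is `ℤ/2^(n-1) ⋊ C₂`, the reflection `b` acting by multiplication by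
`s = 2^(n-2) - 1`. Since `s - 1 = 2 · (odd unit)`, the fixed points of `s` are the two
solutions of `2y = 0`. Hence the centralizer of a rotation `a^r` is `⟨a⟩` unless `a^r` is
central, and the centralizer of a reflection `a^r b` consists of the four elements `a^p` and
`a^(r+p) b` with `2p = 0`; it depends only on `r` modulo the fixed points, so there are
`2^(n-1) / 2` of them. The one centralizer of order `2^(n-1)` is thus the only vertex whose
size differs from the others, and the complement of the equal-size graph is a star. -/

theorem pow_zmod_val_add {M : Type*} [Monoid M] {x : M} {n : ℕ} [NeZero n] (hx : x ^ n = 1)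
    (i j : ZMod n) : x ^ (i + j).val = x ^ i.val * x ^ j.val := by
  rw [ZMod.val_add, ← pow_eq_pow_mod _ hx, pow_add]

theorem ZMod.two_cases (j : ZMod 2) : j = 0 ∨ j = 1 := by decide +revert

theorem ZMod.val_one_two : (1 : ZMod 2).val = 1 := rfl

def zmodPowHom {M : Type*} [Monoid M] {x : M} {n : ℕ} [NeZero n] (hx : x ^ n = 1) :
    Multiplicative (ZMod n) →* M where
  toFun a := x ^ a.toAdd.val
  map_one' := by simp
  map_mul' a b := pow_zmod_val_add hx a.toAdd b.toAdd

theorem zmodPowHom_apply {M : Type*} [Monoid M] {x : M} {n : ℕ} [NeZero n] (hx : x ^ n = 1)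
    (a : Multiplicative (ZMod n)) : zmodPowHom hx a = x ^ a.toAdd.val := rfl

theorem zmodPowHom_ofAdd_natCast {M : Type*} [Monoid M] {x : M} {n : ℕ} [NeZero n]
    (hx : x ^ n = 1) (a : ℕ) : zmodPowHom hx (.ofAdd (a : ZMod n)) = x ^ a := by
  rw [zmodPowHom_apply, toAdd_ofAdd, ZMod.val_natCast, ← pow_eq_pow_mod a hx]

theorem nonempty_iso_starGraph_of_adj_iff {V : Type*} {Γ : SimpleGraph V} {m : ℕ}
    (hV : Nat.card V = m + 1) (c : V) (hΓ : ∀ v w, Γ.Adj v w ↔ v ≠ w ∧ (v = c ∨ w = c)) :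
    Nonempty (Γ ≃g starGraph m) := by
  classical
  have : Finite V := Nat.finite_of_card_ne_zero (by omega)
  have e : {v // v ≠ c} ≃ Fin m := Finite.equivFinOfCardEq <| by
    rw [← add_left_inj 1, ← Finite.card_option, Nat.card_congr (Equiv.optionSubtypeNe c), hV]
  let f : Fin 1 ⊕ Fin m ≃ V := (Equiv.sumComm _ _).trans <|
    (Equiv.sumCongr e.symm (Equiv.ofUnique _ _)).trans (Equiv.subtypeNeSumPUnit.{0} c)
  refine ⟨RelIso.symm ⟨f, fun {a b} => ?_⟩⟩
  rcases a with a | a <;> rcases b with b | b <;>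
    simp [f, hΓ, starGraph, (e.symm _).2, Ne.symm (e.symm _).2]

theorem cocentralizerGraph_adj {G : Type*} [Group G]
    {A B : {H : Subgroup G // IsProperCentralizer H}} :
    (cocentralizerGraph G).Adj A B ↔ A ≠ B ∧ Nat.card A.1 ≠ Nat.card B.1 := by
  simp only [cocentralizerGraph, centralizerGraph, SimpleGraph.compl_adj]
  tauto

section Transfer

variable {G G' : Type*} [Group G] [Group G'] (e : G ≃* G')

theorem MulEquiv.map_centralizer_singleton (x : G) :
    (Subgroup.centralizer {x}).map e.toMonoidHom = Subgroup.centralizer {e x} := by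
  ext y
  rw [Subgroup.mem_map_equiv, Subgroup.mem_centralizer_singleton_iff,
    Subgroup.mem_centralizer_singleton_iff, ← e.injective.eq_iff]
  simp

theorem isProperCentralizer_mapSubgroup_iff {H : Subgroup G} :
    IsProperCentralizer (e.mapSubgroup H) ↔ IsProperCentralizer H := by
  simp only [IsProperCentralizer, e.surjective.exists, ← e.map_centralizer_singleton,
    ← MulEquiv.coe_mapSubgroup, (OrderIso.injective _).eq_iff, ne_eq, map_eq_top_iff]

theorem card_mapSubgroup (H : Subgroup G) : Nat.card (e.mapSubgroup H) = Nat.card H :=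
  Subgroup.card_map_of_injective e.injective

def MulEquiv.cocentralizerGraphCongr : cocentralizerGraph G ≃g cocentralizerGraph G' where
  toEquiv :=
    e.mapSubgroup.toEquiv.subtypeEquiv fun _ => (isProperCentralizer_mapSubgroup_iff e).symm
  map_rel_iff' {A B} := by
    rw [cocentralizerGraph_adj, cocentralizerGraph_adj, (Equiv.injective _).ne_iff]
    rw [← card_mapSubgroup e A.1, ← card_mapSubgroup e B.1]
    rfl

end Transfer

theorem ncard_setOf_isProperCentralizer_card_eq_congr {G G' : Type*} [Group G] [Group G']
    (e : G ≃* G') (d : ℕ) :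
    {H : Subgroup G | IsProperCentralizer H ∧ Nat.card H = d}.ncard =
      {H : Subgroup G' | IsProperCentralizer H ∧ Nat.card H = d}.ncard := by
  rw [← Nat.card_coe_set_eq, ← Nat.card_coe_set_eq]
  exact Nat.card_congr (e.mapSubgroup.toEquiv.subtypeEquiv fun H =>
    and_congr (isProperCentralizer_mapSubgroup_iff e).symm (by rw [← card_mapSubgroup e H]; rfl))

theorem ncard_setOf_isProperCentralizer_of_iso_starGraph {G : Type*} [Group G] {m : ℕ}
    (φ : cocentralizerGraph G ≃g starGraph m) :
    {H : Subgroup G | IsProperCentralizer H}.ncard = m + 1 := by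
  change Nat.card {H // IsProperCentralizer H} = m + 1
  rw [Nat.card_congr φ.toEquiv, Nat.card_sum]
  simp [add_comm]

/-- `R ⋊ C₂`, the generator of `C₂` acting on `R` by multiplication by `s`; the pair `⟨r, j⟩`
stands for `a ^ r * b ^ j`. -/
@[ext]
structure SemidirectInvolution (R : Type*) [CommRing R] (s : R) where
  r : R
  j : ZMod 2

namespace SemidirectInvolution

variable {R : Type*} [CommRing R] {s : R}

instance : Mul (SemidirectInvolution R s) := ⟨fun g h => ⟨g.r + s ^ g.j.val * h.r, g.j + h.j⟩⟩
instance : One (SemidirectInvolution R s) := ⟨⟨0, 0⟩⟩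
instance : Inv (SemidirectInvolution R s) := ⟨fun g => ⟨-(s ^ g.j.val * g.r), g.j⟩⟩

@[simp] theorem mul_r (g h : SemidirectInvolution R s) : (g * h).r = g.r + s ^ g.j.val * h.r := rfl
@[simp] theorem mul_j (g h : SemidirectInvolution R s) : (g * h).j = g.j + h.j := rfl
@[simp] theorem mk_zero_zero : (⟨0, 0⟩ : SemidirectInvolution R s) = 1 := rfl
@[simp] theorem one_r : (1 : SemidirectInvolution R s).r = 0 := rfl
@[simp] theorem one_j : (1 : SemidirectInvolution R s).j = 0 := rfl
@[simp] theorem inv_r (g : SemidirectInvolution R s) : g⁻¹.r = -(s ^ g.j.val * g.r) := rfl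
@[simp] theorem inv_j (g : SemidirectInvolution R s) : g⁻¹.j = g.j := rfl

def fixedBy (s : R) : AddSubgroup R := (AddMonoidHom.mulLeft (s - 1)).ker

theorem mem_fixedBy {y : R} : y ∈ fixedBy s ↔ s * y = y := by
  rw [fixedBy, AddMonoidHom.mem_ker, AddMonoidHom.coe_mulLeft, sub_mul, one_mul, sub_eq_zero]

theorem one_notMem_fixedBy (hs : s ≠ 1) : (1 : R) ∉ fixedBy s := by
  simpa [mem_fixedBy] using hs

variable [Fact (s ^ 2 = 1)]

instance : Group (SemidirectInvolution R s) :=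
  Group.ofLeftAxioms
    (fun _ _ _ => by ext <;> simp [pow_zmod_val_add Fact.out, add_assoc, mul_add, mul_assoc])
    (fun _ => by ext <;> simp)
    (fun g => by
      ext
      · simp
      · exact ZModModule.add_self g.j)

variable (R s) in
def rotations : Subgroup (SemidirectInvolution R s) where
  carrier := {g | g.j = 0}
  one_mem' := rfl
  mul_mem' {g h} hg hh := by simp_all
  inv_mem' := id

theorem mem_rotations {g : SemidirectInvolution R s} : g ∈ rotations R s ↔ g.j = 0 := Iff.rfl

theorem card_rotations : Nat.card (rotations R s) = Nat.card R :=
  Nat.card_congr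
    { toFun g := g.1.r
      invFun r := ⟨⟨r, 0⟩, rfl⟩
      left_inv g := Subtype.ext (SemidirectInvolution.ext rfl g.2.symm)
      right_inv _ := rfl }

theorem mem_centralizer_rotation {r : R} {g : SemidirectInvolution R s} :
    g ∈ Subgroup.centralizer {⟨r, 0⟩} ↔ g.j = 0 ∨ r ∈ fixedBy s := by
  rw [Subgroup.mem_centralizer_singleton_iff, SemidirectInvolution.ext_iff, mem_fixedBy]
  rcases ZMod.two_cases g.j with h | h <;> simp [h, ZMod.val_one_two, add_comm _ g.r, eq_comm]

theorem centralizer_rotation_of_mem {r : R} (hr : r ∈ fixedBy s) :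
    Subgroup.centralizer {⟨r, 0⟩} = (⊤ : Subgroup (SemidirectInvolution R s)) :=
  eq_top_iff.mpr fun _ _ => mem_centralizer_rotation.mpr (.inr hr)

theorem centralizer_rotation_of_notMem {r : R} (hr : r ∉ fixedBy s) :
    Subgroup.centralizer {⟨r, 0⟩} = rotations R s := by
  ext; simp [mem_centralizer_rotation, mem_rotations, hr]

theorem mem_centralizer_reflection {r : R} {g : SemidirectInvolution R s} :
    g ∈ Subgroup.centralizer {⟨r, 1⟩} ↔ g.r - g.j.val * r ∈ fixedBy s := by
  rw [Subgroup.mem_centralizer_singleton_iff, SemidirectInvolution.ext_iff, mem_fixedBy]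
  rcases ZMod.two_cases g.j with h | h
  · simp [h, ZMod.val_one_two, add_comm, eq_comm]
  · simp only [h, mul_r, mul_j, ZMod.val_one_two, pow_one, one_mul, add_comm (1 : ZMod 2),
      and_true, Nat.cast_one]
    constructor <;> intro h' <;> linear_combination -h'

theorem card_centralizer_reflection (r : R) :
    Nat.card (Subgroup.centralizer {(⟨r, 1⟩ : SemidirectInvolution R s)}) =
      Nat.card (fixedBy s) * 2 := by
  let e : Subgroup.centralizer {(⟨r, 1⟩ : SemidirectInvolution R s)} ≃ fixedBy s × ZMod 2 :=
    { toFun g := (⟨g.1.r - g.1.j.val * r, mem_centralizer_reflection.mp g.2⟩, g.1.j)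
      invFun p := ⟨⟨p.1 + p.2.val * r, p.2⟩, mem_centralizer_reflection.mpr (by simp)⟩
      left_inv g := by ext <;> simp
      right_inv p := by ext <;> simp }
  rw [Nat.card_congr e, Nat.card_prod, Nat.card_zmod]

theorem centralizer_reflection_eq_iff {r r' : R} :
    Subgroup.centralizer {(⟨r, 1⟩ : SemidirectInvolution R s)} = Subgroup.centralizer {⟨r', 1⟩} ↔
      r' - r ∈ fixedBy s := by
  constructor
  · intro h
    have : (⟨r', 1⟩ : SemidirectInvolution R s) ∈ Subgroup.centralizer {⟨r, 1⟩} :=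
      h ▸ Subgroup.mem_centralizer_singleton_iff.mpr rfl
    simpa [mem_centralizer_reflection, ZMod.val_one_two] using this
  · intro h
    ext g
    have hj : (g.j.val : R) * (r' - r) ∈ fixedBy s := by
      simpa using AddSubgroup.nsmul_mem _ h g.j.val
    rw [mem_centralizer_reflection, mem_centralizer_reflection,
      show g.r - g.j.val * r = g.r - g.j.val * r' + g.j.val * (r' - r) by ring,
      AddSubgroup.add_mem_cancel_right _ hj]

theorem centralizer_reflection_ne_top (hs : s ≠ 1) (r : R) :
    Subgroup.centralizer {(⟨r, 1⟩ : SemidirectInvolution R s)} ≠ ⊤ := fun h => by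
  have : (⟨1, 0⟩ : SemidirectInvolution R s) ∈ Subgroup.centralizer {⟨r, 1⟩} :=
    h ▸ Subgroup.mem_top _
  simp [mem_centralizer_reflection, one_notMem_fixedBy hs] at this

theorem rotations_ne_top : rotations R s ≠ ⊤ := fun h => by
  have : (⟨0, 1⟩ : SemidirectInvolution R s) ∈ rotations R s := h ▸ Subgroup.mem_top _
  simp [mem_rotations] at this

theorem rotations_ne_centralizer_reflection (r : R) :
    rotations R s ≠ Subgroup.centralizer {⟨r, 1⟩} := fun h => by
  have : (⟨r, 1⟩ : SemidirectInvolution R s) ∈ rotations R s :=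
    h ▸ Subgroup.mem_centralizer_singleton_iff.mpr rfl
  simp [mem_rotations] at this

theorem isProperCentralizer_iff (hs : s ≠ 1) {H : Subgroup (SemidirectInvolution R s)} :
    IsProperCentralizer H ↔ H = rotations R s ∨ ∃ r, H = Subgroup.centralizer {⟨r, 1⟩} := by
  constructor
  · rintro ⟨hH, ⟨r, j⟩, rfl⟩
    rcases ZMod.two_cases j with rfl | rfl
    · by_cases hr : r ∈ fixedBy s
      · exact absurd (centralizer_rotation_of_mem hr) hH
      · exact .inl (centralizer_rotation_of_notMem hr)
    · exact .inr ⟨r, rfl⟩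
  · rintro (rfl | ⟨r, rfl⟩)
    · exact ⟨rotations_ne_top, ⟨1, 0⟩,
        (centralizer_rotation_of_notMem (one_notMem_fixedBy hs)).symm⟩
    · exact ⟨centralizer_reflection_ne_top hs r, _, rfl⟩

theorem ncard_range_centralizer_reflection :
    (Set.range fun r : R => Subgroup.centralizer {(⟨r, 1⟩ : SemidirectInvolution R s)}).ncard =
      Nat.card (R ⧸ fixedBy s) := by
  rw [← Nat.card_coe_set_eq]
  refine Nat.card_congr ((Setoid.quotientKerEquivRange _).symm.trans (Quotient.congrRight ?_))
  intro r r'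
  rw [Setoid.ker_def, centralizer_reflection_eq_iff, QuotientAddGroup.leftRel_apply, neg_add_eq_sub]

theorem isProperCentralizer_iff_mem (hs : s ≠ 1) {H : Subgroup (SemidirectInvolution R s)} :
    IsProperCentralizer H ↔
      H ∈ insert (rotations R s) (Set.range fun r => Subgroup.centralizer {⟨r, 1⟩}) := by
  simp [isProperCentralizer_iff hs, eq_comm]

theorem card_of_isProperCentralizer_of_ne (hs : s ≠ 1) {H : Subgroup (SemidirectInvolution R s)}
    (hH : IsProperCentralizer H) (h : H ≠ rotations R s) :
    Nat.card H = Nat.card (fixedBy s) * 2 := by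
  obtain ⟨r, rfl⟩ := ((isProperCentralizer_iff hs).mp hH).resolve_left h
  exact card_centralizer_reflection r

theorem card_eq_card_iff_eq_rotations (hs : s ≠ 1) (hR : Nat.card R ≠ Nat.card (fixedBy s) * 2)
    {H : Subgroup (SemidirectInvolution R s)} (hH : IsProperCentralizer H) :
    Nat.card H = Nat.card R ↔ H = rotations R s := by
  refine ⟨fun hcard => ?_, fun h => h ▸ card_rotations⟩
  by_contra h
  exact hR (hcard.symm.trans (card_of_isProperCentralizer_of_ne hs hH h))

theorem setOf_isProperCentralizer_card_eq_card (hs : s ≠ 1)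
    (hR : Nat.card R ≠ Nat.card (fixedBy s) * 2) :
    {H : Subgroup (SemidirectInvolution R s) | IsProperCentralizer H ∧ Nat.card H = Nat.card R} =
      {rotations R s} := by
  ext H
  simp only [Set.mem_ofPred_eq, Set.mem_singleton_iff]
  constructor
  · rintro ⟨hH, hcard⟩
    exact (card_eq_card_iff_eq_rotations hs hR hH).mp hcard
  · rintro rfl
    exact ⟨(isProperCentralizer_iff hs).mpr (.inl rfl), card_rotations⟩

theorem setOf_isProperCentralizer_card_eq_card_fixedBy (hs : s ≠ 1)
    (hR : Nat.card R ≠ Nat.card (fixedBy s) * 2) :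
    {H : Subgroup (SemidirectInvolution R s) |
      IsProperCentralizer H ∧ Nat.card H = Nat.card (fixedBy s) * 2} =
      Set.range fun r => Subgroup.centralizer {⟨r, 1⟩} := by
  ext H
  simp only [Set.mem_ofPred_eq]
  constructor
  · rintro ⟨hH, hcard⟩
    rcases (isProperCentralizer_iff hs).mp hH with rfl | ⟨r, rfl⟩
    exacts [absurd (card_rotations.symm.trans hcard) hR, ⟨r, rfl⟩]
  · rintro ⟨r, rfl⟩
    exact ⟨(isProperCentralizer_iff hs).mpr (.inr ⟨r, rfl⟩), card_centralizer_reflection r⟩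

theorem cocentralizerGraph_adj_iff (hs : s ≠ 1) (hR : Nat.card R ≠ Nat.card (fixedBy s) * 2)
    {A B : {H : Subgroup (SemidirectInvolution R s) // IsProperCentralizer H}} :
    (cocentralizerGraph _).Adj A B ↔ A ≠ B ∧ (A.1 = rotations R s ∨ B.1 = rotations R s) := by
  have hcardA := card_eq_card_iff_eq_rotations hs hR A.2
  have hcardB := card_eq_card_iff_eq_rotations hs hR B.2
  rw [cocentralizerGraph_adj, Ne, Ne, Subtype.ext_iff]
  by_cases hA : A.1 = rotations R s <;> by_cases hB : B.1 = rotations R s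
  · simp [hA, hB]
  · simp [hA, Ne.symm hB, card_rotations, Ne.symm (mt hcardB.mp hB)]
  · simp [hA, hB, card_rotations, mt hcardA.mp hA]
  · simp [hA, hB, card_of_isProperCentralizer_of_ne hs A.2 hA,
      card_of_isProperCentralizer_of_ne hs B.2 hB]

theorem nonempty_cocentralizerGraph_iso_starGraph [Finite R] (hs : s ≠ 1)
    (hR : Nat.card R ≠ Nat.card (fixedBy s) * 2) :
    Nonempty (cocentralizerGraph (SemidirectInvolution R s) ≃g
      starGraph (Nat.card (R ⧸ fixedBy s))) := by
  refine nonempty_iso_starGraph_of_adj_iff ?_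
    ⟨rotations R s, (isProperCentralizer_iff hs).mpr (.inl rfl)⟩
    fun A B => by rw [cocentralizerGraph_adj_iff hs hR, Subtype.ext_iff, Subtype.ext_iff]
  rw [← ncard_range_centralizer_reflection, ← Set.ncard_insert_of_notMem ?_ (Set.finite_range _)]
  · exact Nat.card_congr (Equiv.subtypeEquivRight fun H => isProperCentralizer_iff_mem hs)
  · rintro ⟨r, hr⟩
    exact rotations_ne_centralizer_reflection r hr.symm

variable {H : Type*} [Group H]

def lift (f : Multiplicative R →* H) (v : H) (hv : v ^ 2 = 1)
    (hfv : ∀ r, v * f (.ofAdd r) = f (.ofAdd (s * r)) * v) : SemidirectInvolution R s →* H where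
  toFun g := f (.ofAdd g.r) * v ^ g.j.val
  map_one' := by simp
  map_mul' g h := by
    have hcomm (j : ZMod 2) (r : R) :
        v ^ j.val * f (.ofAdd r) = f (.ofAdd (s ^ j.val * r)) * v ^ j.val := by
      rcases ZMod.two_cases j with rfl | rfl <;> simp [ZMod.val_one_two, hfv]
    simp only [mul_r, mul_j, ofAdd_add, map_mul, pow_zmod_val_add hv, mul_assoc]
    rw [← mul_assoc (v ^ _), hcomm, mul_assoc]

theorem lift_mk (f : Multiplicative R →* H) (v : H) (hv : v ^ 2 = 1)
    (hfv : ∀ r, v * f (.ofAdd r) = f (.ofAdd (s * r)) * v) (r : R) (j : ZMod 2) :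
    lift f v hv hfv ⟨r, j⟩ = f (.ofAdd r) * v ^ j.val := rfl

theorem mk_one_zero_pow (m : ℕ) : (⟨1, 0⟩ : SemidirectInvolution R s) ^ m = ⟨m, 0⟩ := by
  induction m with
  | zero => ext <;> simp
  | succ m ih => ext <;> simp [pow_succ, ih]

theorem mk_zero_one_pow_val (j : ZMod 2) :
    (⟨0, 1⟩ : SemidirectInvolution R s) ^ j.val = ⟨0, j⟩ := by
  rcases ZMod.two_cases j with rfl | rfl
  · rfl
  · simp [ZMod.val_one_two]

end SemidirectInvolution

namespace QuasidihedralGroup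

open SemidirectInvolution

variable (k : ℕ)

theorem two_pow_eq_zero : (2 : ZMod (2 ^ (k + 3))) ^ (k + 3) = 0 := by
  exact_mod_cast ZMod.natCast_self (2 ^ (k + 3))

theorem two_pow_ne_zero : (2 : ZMod (2 ^ (k + 3))) ^ (k + 2) ≠ 0 := by
  have : ((2 ^ (k + 2) : ℕ) : ZMod (2 ^ (k + 3))) ≠ 0 := by
    rw [Ne, ZMod.natCast_eq_zero_iff, Nat.pow_dvd_pow_iff_le_right one_lt_two]
    omega
  exact_mod_cast this

def twist : ZMod (2 ^ (k + 3)) := 2 ^ (k + 2) - 1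

instance : Fact (twist k ^ 2 = 1) :=
  ⟨by rw [twist]; linear_combination (2 ^ (k + 1) - 1 : ZMod (2 ^ (k + 3))) * two_pow_eq_zero k⟩

abbrev Model : Type := SemidirectInvolution (ZMod (2 ^ (k + 3))) (twist k)

theorem mem_fixedBy_twist {y : ZMod (2 ^ (k + 3))} : y ∈ fixedBy (twist k) ↔ 2 * y = 0 := by
  have hu : IsUnit (1 - (2 : ZMod (2 ^ (k + 3))) ^ (k + 1)) := IsNilpotent.isUnit_one_sub
    ⟨k + 3, by rw [← pow_mul, mul_comm, pow_mul, two_pow_eq_zero, zero_pow (by omega)]⟩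
  rw [mem_fixedBy, ← sub_eq_zero,
    show twist k * y - y = -((1 - 2 ^ (k + 1)) * (2 * y)) by rw [twist]; ring,
    neg_eq_zero, hu.mul_right_eq_zero]

theorem card_fixedBy_twist : Nat.card (fixedBy (twist k)) = 2 := by
  classical
  have hF : (fixedBy (twist k) : Set (ZMod (2 ^ (k + 3)))) = {y | 2 • y = 0} := by
    ext; simp [mem_fixedBy_twist, two_mul]
  rw [← SetLike.coe_sort_coe, Nat.card_coe_set_eq, hF]
  apply le_antisymm
  · rw [Set.ncard_eq_toFinset_card', Set.toFinset_ofPred]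
    exact IsAddCyclic.card_nsmul_eq_zero_le two_pos
  · calc 2 = ({0, 2 ^ (k + 2)} : Set (ZMod (2 ^ (k + 3)))).ncard :=
          (Set.ncard_pair (two_pow_ne_zero k).symm).symm
      _ ≤ _ := Set.ncard_le_ncard (by
          simp [Set.insert_subset_iff, ← pow_succ', two_pow_eq_zero])

theorem of_zero_pow : (PresentedGroup.of 0 : QuasidihedralGroup (k + 4)) ^ 2 ^ (k + 3) = 1 :=
  (map_pow _ _ _).symm.trans (PresentedGroup.one_of_mem (Set.mem_insert _ _))

theorem of_one_sq : (PresentedGroup.of 1 : QuasidihedralGroup (k + 4)) ^ 2 = 1 :=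
  (map_pow _ _ _).symm.trans (PresentedGroup.one_of_mem (.inr (.inl rfl)))

theorem of_one_conj_of_zero :
    (PresentedGroup.of 1 * PresentedGroup.of 0 * (PresentedGroup.of 1)⁻¹ :
      QuasidihedralGroup (k + 4)) = PresentedGroup.of 0 ^ (2 ^ (k + 2) - 1) := by
  have := PresentedGroup.one_of_mem (rels := qdRels (k + 4)) (.inr (.inr rfl))
  simp only [map_mul, map_inv, map_pow, mul_inv_eq_one] at this
  exact this

def toModel : QuasidihedralGroup (k + 4) →* Model k :=
  PresentedGroup.toGroup (f := ![⟨1, 0⟩, ⟨0, 1⟩]) <| by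
    rintro r (rfl | rfl | rfl)
    · simp [mk_one_zero_pow]
    · ext <;> simp [pow_two, ZMod.val_one_two, ZModModule.add_self]
    · simp only [map_mul, map_inv, map_pow, FreeGroup.lift_apply_of, mul_inv_eq_one]
      ext <;> simp [mk_one_zero_pow, ZMod.val_one_two, ZModModule.add_self]
      rfl

theorem toModel_of_zero : toModel k (PresentedGroup.of 0) = ⟨1, 0⟩ := PresentedGroup.toGroup.of _

theorem toModel_of_one : toModel k (PresentedGroup.of 1) = ⟨0, 1⟩ := PresentedGroup.toGroup.of _

def ofModel : Model k →* QuasidihedralGroup (k + 4) :=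
  lift (zmodPowHom (of_zero_pow k)) (PresentedGroup.of 1) (of_one_sq k) fun r => by
    obtain ⟨m, rfl⟩ := ZMod.natCast_zmod_surjective r
    rw [show twist k * m = ((2 ^ (k + 2) - 1) * m : ℕ) by
        push_cast [twist, Nat.cast_sub Nat.one_le_two_pow]; rfl,
      zmodPowHom_ofAdd_natCast, zmodPowHom_ofAdd_natCast, pow_mul, ← of_one_conj_of_zero, conj_pow,
      inv_mul_cancel_right]

def equivModel : QuasidihedralGroup (k + 4) ≃* Model k :=
  (toModel k).toMulEquiv (ofModel k)
    (PresentedGroup.ext fun x => by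
      fin_cases x
      · simpa [toModel_of_zero, ofModel, lift_mk] using zmodPowHom_ofAdd_natCast (of_zero_pow k) 1
      · simp [toModel_of_one, ofModel, lift_mk, ZMod.val_one_two])
    (MonoidHom.ext fun ⟨r, j⟩ => by
      rw [MonoidHom.comp_apply, MonoidHom.id_apply, ofModel, lift_mk, zmodPowHom_apply, map_mul,
        map_pow, map_pow, toModel_of_zero, toModel_of_one, mk_one_zero_pow, mk_zero_one_pow_val,
        toAdd_ofAdd, ZMod.natCast_zmod_val]
      ext <;> simp)

theorem twist_ne_one : twist k ≠ 1 := fun h => by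
  have h1 : (1 : ZMod (2 ^ (k + 3))) ∈ fixedBy (twist k) := by
    rw [mem_fixedBy, h, mul_one]
  rw [mem_fixedBy_twist, mul_one] at h1
  exact two_pow_ne_zero k (by linear_combination (2 : ZMod (2 ^ (k + 3))) ^ (k + 1) * h1)

theorem card_zmod_ne_card_fixedBy_twist_mul_two :
    Nat.card (ZMod (2 ^ (k + 3))) ≠ Nat.card (fixedBy (twist k)) * 2 := by
  rw [Nat.card_zmod, card_fixedBy_twist, pow_succ, pow_succ]
  have := Nat.one_le_two_pow (n := k + 1)
  omega

theorem card_quotient_fixedBy_twist :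
    Nat.card (ZMod (2 ^ (k + 3)) ⧸ fixedBy (twist k)) = 2 ^ (k + 2) := by
  have := AddSubgroup.card_eq_card_quotient_mul_card_addSubgroup (fixedBy (twist k))
  rw [Nat.card_zmod, card_fixedBy_twist] at this
  exact Nat.eq_of_mul_eq_mul_right two_pos (this.symm.trans (pow_succ 2 (k + 2)))

theorem ncard_setOf_isProperCentralizer_card_eq_two_pow :
    {H : Subgroup (Model k) | IsProperCentralizer H ∧ Nat.card H = 2 ^ (k + 3)}.ncard = 1 := by
  have := setOf_isProperCentralizer_card_eq_card (twist_ne_one k)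
    (card_zmod_ne_card_fixedBy_twist_mul_two k)
  rw [Nat.card_zmod] at this
  rw [this, Set.ncard_singleton]

theorem ncard_setOf_isProperCentralizer_card_eq_four :
    {H : Subgroup (Model k) | IsProperCentralizer H ∧ Nat.card H = 4}.ncard = 2 ^ (k + 2) := by
  have := setOf_isProperCentralizer_card_eq_card_fixedBy (twist_ne_one k)
    (card_zmod_ne_card_fixedBy_twist_mul_two k)
  rw [card_fixedBy_twist] at this
  rw [this, ncard_range_centralizer_reflection, card_quotient_fixedBy_twist]

theorem nonempty_cocentralizerGraph_iso_starGraph :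
    Nonempty (cocentralizerGraph (Model k) ≃g starGraph (2 ^ (k + 2))) :=
  card_quotient_fixedBy_twist k ▸ SemidirectInvolution.nonempty_cocentralizerGraph_iso_starGraph
    (twist_ne_one k) (card_zmod_ne_card_fixedBy_twist_mul_two k)

end QuasidihedralGroup

theorem quasidihedral_cocentralizer_graph (n : ℕ) (hn : 4 ≤ n) :
    {H : Subgroup (QuasidihedralGroup n) | IsProperCentralizer H}.ncard = 2 ^ (n - 2) + 1 ∧
    {H : Subgroup (QuasidihedralGroup n) |
      IsProperCentralizer H ∧ Nat.card H = 2 ^ (n - 1)}.ncard = 1 ∧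
    {H : Subgroup (QuasidihedralGroup n) |
      IsProperCentralizer H ∧ Nat.card H = 4}.ncard = 2 ^ (n - 2) ∧
    Nonempty (cocentralizerGraph (QuasidihedralGroup n) ≃g starGraph (2 ^ (n - 2))) := by
  obtain ⟨k, rfl⟩ : ∃ k, n = k + 4 := ⟨n - 4, by omega⟩
  let e := QuasidihedralGroup.equivModel k
  obtain ⟨φ⟩ := QuasidihedralGroup.nonempty_cocentralizerGraph_iso_starGraph k
  let ψ : cocentralizerGraph (QuasidihedralGroup (k + 4)) ≃g starGraph (2 ^ (k + 2)) :=
    e.cocentralizerGraphCongr.trans φ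
  refine ⟨ncard_setOf_isProperCentralizer_of_iso_starGraph ψ, ?_, ?_, ⟨ψ⟩⟩
  · rw [ncard_setOf_isProperCentralizer_card_eq_congr e]
    exact QuasidihedralGroup.ncard_setOf_isProperCentralizer_card_eq_two_pow k
  · rw [ncard_setOf_isProperCentralizer_card_eq_congr e]
    exact QuasidihedralGroup.ncard_setOf_isProperCentralizer_card_eq_four k
end

section
/- Let n ≥ 4. The distance signless Laplacian matrix of the star K_{1,2^{n-2}} (the co-centralizer graph of the quasidihedral group QD_{2^n}) has eigenvalue 2^{n-1} − 3 with multiplicity 2^{n-2} − 1 and eigenvalues (1/2)[(5·2^{n-2} − 3) ± √(9·2^{2n-4} − 14·2^{n-2} + 9)], each with multiplicity 1. -/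
open Polynomial

/-! The centre of `K_{1,N}` has transmission `N` and every leaf has transmission `2N - 1`, so
`D^Q - (2N - 3) I` is constant on the blocks of the partition {centre, leaves}: it is `P K Pᵀ`
for the characteristic matrix `P` of the partition and `K = [[3 - N, 1], [1, 2]]`. Since
`χ(P B) = X ^ (N - 1) χ(B P)` for the `(N + 1) × 2` matrix `P`, the characteristic polynomial is
`(X - (2N - 3)) ^ (N - 1)` times that of the `2 × 2` quotient matrix `[[N, N], [1, 4N - 3]]`,
whose roots come from the quadratic formula. Because `N` is an integer, `2N - 3` is not one of
them (it would force `N (5 - 2N) = 0`), so the three multiplicities do not interact. -/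

namespace Matrix

variable {m n R : Type*} [DecidableEq n] [CommRing R]

theorem charpoly_scalar_add [Fintype n] (c : R) (M : Matrix n n R) :
    (scalar n c + M).charpoly = M.charpoly.comp (X - C c) := by
  have h := charpoly_sub_scalar (scalar n c + M) c
  rw [add_sub_cancel_left] at h
  rw [h, comp_assoc]
  simp

theorem charpoly_scalar_add_mul [Fintype m] [DecidableEq m] [Fintype n] (c : R)
    (U : Matrix m n R) (V : Matrix n m R) (h : Fintype.card n ≤ Fintype.card m) :
    (scalar m c + U * V).charpoly =
      (X - C c) ^ (Fintype.card m - Fintype.card n) * (scalar n c + V * U).charpoly := by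
  rw [charpoly_scalar_add, charpoly_scalar_add, charpoly_mul_comm_of_le U V h, mul_comp, pow_comp,
    X_comp]

theorem submatrix_eq_one_submatrix_mul_mul_transpose [Fintype n] (f : m → n) (K : Matrix n n R) :
    K.submatrix f f =
      (1 : Matrix n n R).submatrix f id * (K * ((1 : Matrix n n R).submatrix f id)ᵀ) := by
  ext u v
  simp [mul_apply, one_apply]

theorem one_submatrix_transpose_mul_self [Fintype m] (f : m → n) :
    ((1 : Matrix n n R).submatrix f id)ᵀ * (1 : Matrix n n R).submatrix f id =
      diagonal fun k => ((Finset.univ.filter fun u => f u = k).card : R) := by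
  ext k l
  simp only [transpose_apply, submatrix_apply, id, mul_apply, one_apply, diagonal_apply]
  simp_rw [ite_zero_mul_ite_zero, mul_one, Finset.sum_boole]
  split_ifs with hkl
  · subst hkl
    simp [eq_comm]
  · rw [Finset.filter_eq_empty_iff.mpr fun u _ h => hkl (h.1.symm.trans h.2), Finset.card_empty,
      Nat.cast_zero]

theorem charpoly_scalar_add_submatrix [Fintype m] [DecidableEq m] [Fintype n] (c : R)
    (f : m → n) (K : Matrix n n R) (h : Fintype.card n ≤ Fintype.card m) :
    (scalar m c + K.submatrix f f).charpoly =
      (X - C c) ^ (Fintype.card m - Fintype.card n) *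
        (scalar n c +
          K * diagonal fun k => ((Finset.univ.filter fun u => f u = k).card : R)).charpoly := by
  rw [submatrix_eq_one_submatrix_mul_mul_transpose, charpoly_scalar_add_mul _ _ _ h,
    Matrix.mul_assoc, one_submatrix_transpose_mul_self]

end Matrix

theorem Polynomial.rootMultiplicity_X_sub_C_pow_mul_X_sub_C_mul_X_sub_C_s12 {K : Type*} [Field K]
    [DecidableEq K] (a r s : K) (k : ℕ) (x : K) :
    ((X - C a) ^ k * ((X - C r) * (X - C s))).rootMultiplicity x =
      (if x = a then k else 0) + (if x = r then 1 else 0) + (if x = s then 1 else 0) := by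
  have hprod : (X - C a) ^ k * ((X - C r) * (X - C s)) =
      ((Multiset.replicate k a + {r, s}).map fun b => X - C b).prod := by
    simp [Multiset.prod_replicate]
    ring
  rw [hprod, ← count_roots, roots_multiset_prod_X_sub_C]
  simp only [Multiset.count_add, Multiset.count_replicate, Multiset.insert_eq_cons,
    Multiset.count_cons, Multiset.count_singleton, eq_comm (a := a)]
  ring

theorem Polynomial.X_sq_sub_C_mul_X_add_C_eq_mul {K : Type*} [Field K] [NeZero (2 : K)]
    {b c s : K} (hs : discrim 1 (-b) c = s * s) :
    X ^ 2 - C b * X + C c = (X - C ((b + s) / 2)) * (X - C ((b - s) / 2)) := by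
  have hsum : (b + s) / 2 + (b - s) / 2 = b := by
    field_simp
    ring
  have hprod : (b + s) / 2 * ((b - s) / 2) = c := by
    rw [discrim] at hs
    field_simp
    linear_combination hs
  calc X ^ 2 - C b * X + C c
      = X ^ 2 - C ((b + s) / 2 + (b - s) / 2) * X + C ((b + s) / 2 * ((b - s) / 2)) := by
        rw [hsum, hprod]
    _ = (X - C ((b + s) / 2)) * (X - C ((b - s) / 2)) := by
        simp only [map_add, map_mul]
        ring

theorem SimpleGraph.dist_eq_two_of_adj_of_adj {V : Type*} {G : SimpleGraph V} {u v w : V}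
    (hne : u ≠ v) (hnadj : ¬G.Adj u v) (huw : G.Adj u w) (hwv : G.Adj w v) : G.dist u v = 2 := by
  have h : G.edist u v = 2 := G.edist_eq_two_iff.mpr ⟨hne, hnadj, w, huw, hwv.symm⟩
  simp [SimpleGraph.dist, h]

namespace starGraph

variable {N : ℕ}

@[simp]
theorem dist_inl_inl (a b : Fin 1) : (starGraph N).dist (.inl a) (.inl b) = 0 := by
  simp [Subsingleton.elim a b]

@[simp]
theorem dist_inl_inr (a : Fin 1) (j : Fin N) : (starGraph N).dist (.inl a) (.inr j) = 1 :=
  SimpleGraph.dist_eq_one_iff_adj.mpr (by simp [starGraph])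

@[simp]
theorem dist_inr_inl (i : Fin N) (a : Fin 1) : (starGraph N).dist (.inr i) (.inl a) = 1 :=
  SimpleGraph.dist_eq_one_iff_adj.mpr (by simp [starGraph])

theorem dist_inr_inr (i j : Fin N) :
    (starGraph N).dist (.inr i) (.inr j) = if i = j then 0 else 2 := by
  split_ifs with h
  · simp [h]
  · exact SimpleGraph.dist_eq_two_of_adj_of_adj (w := .inl 0) (by simpa using h)
      (by simp [starGraph]) (by simp [starGraph]) (by simp [starGraph])

theorem transmission_inl (a : Fin 1) : ∑ u, ((starGraph N).dist (.inl a) u : ℝ) = N := by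
  simp [Fintype.sum_sum_type]

theorem transmission_inr (i : Fin N) :
    ∑ u, ((starGraph N).dist (.inr i) u : ℝ) = 2 * N - 1 := by
  have hN : 1 ≤ N := Fin.pos i
  simp [Fintype.sum_sum_type, dist_inr_inr, Finset.sum_ite, Finset.filter_ne,
    Finset.card_erase_of_mem]
  push_cast [hN]
  ring

open Matrix

def block (N : ℕ) : Fin 1 ⊕ Fin N → Fin 2 :=
  Sum.elim (fun _ => 0) (fun _ => 1)

theorem distSignlessLapMatrix_eq :
    distSignlessLapMatrix (starGraph N) =
      scalar _ (2 * N - 3 : ℝ) + (!![3 - (N : ℝ), 1; 1, 2]).submatrix (block N) (block N) := by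
  ext (a | i) (b | j) <;>
    simp only [distSignlessLapMatrix, transMatrix, distMatrix, Matrix.add_apply, diagonal_apply,
      of_apply, transmission_inl, transmission_inr]
  · simp [block, Subsingleton.elim a b]
    ring
  · simp [block]
  · simp [block]
  · by_cases h : i = j <;> simp [block, dist_inr_inr, h]
    ring

theorem card_block_fiber :
    (fun k => ((Finset.univ.filter fun u => block N u = k).card : ℝ)) = ![1, (N : ℝ)] := by
  ext k
  rw [Finset.card_filter, Fintype.sum_sum_type]
  fin_cases k <;> simp [block]

theorem charpoly_distSignlessLapMatrix (hN : 1 ≤ N) :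
    (distSignlessLapMatrix (starGraph N)).charpoly =
      (X - C (2 * N - 3 : ℝ)) ^ (N - 1) *
        (X ^ 2 - C (5 * N - 3 : ℝ) * X + C (4 * N * (N - 1) : ℝ)) := by
  have hquot :
      scalar (Fin 2) (2 * N - 3 : ℝ) + !![3 - (N : ℝ), 1; 1, 2] * diagonal ![1, (N : ℝ)] =
        !![(N : ℝ), N; 1, 4 * N - 3] := by
    ext i j
    fin_cases i <;> fin_cases j <;> simp [vecMul, dotProduct, Fin.sum_univ_two] <;> ring
  have hcard : Fintype.card (Fin 1 ⊕ Fin N) - Fintype.card (Fin 2) = N - 1 := by simp; omega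
  rw [distSignlessLapMatrix_eq, charpoly_scalar_add_submatrix _ _ _ (by simp; omega),
    card_block_fiber, hquot, hcard, charpoly_fin_two, trace_fin_two, det_fin_two]
  simp only [of_apply, cons_val', cons_val_zero, cons_val_one, empty_val', cons_val_fin_one]
  congr 1
  simp only [map_sub, map_mul, map_add, map_natCast, map_ofNat, map_one]
  ring

theorem rootMultiplicity_charpoly_distSignlessLapMatrix (hN : 1 ≤ N) :
    (distSignlessLapMatrix (starGraph N)).charpoly.rootMultiplicity (2 * N - 3 : ℝ) = N - 1 ∧
    (distSignlessLapMatrix (starGraph N)).charpoly.rootMultiplicity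
      ((1 / 2) * ((5 * N - 3) + √(9 * N ^ 2 - 14 * N + 9))) = 1 ∧
    (distSignlessLapMatrix (starGraph N)).charpoly.rootMultiplicity
      ((1 / 2) * ((5 * N - 3) - √(9 * N ^ 2 - 14 * N + 9))) = 1 := by
  simp only [one_div_mul_eq_div, charpoly_distSignlessLapMatrix hN]
  set d : ℝ := 9 * N ^ 2 - 14 * N + 9
  have hd : 0 < d := by nlinarith [sq_nonneg (3 * N - 7 / 3 : ℝ)]
  have hdiscrim : discrim 1 (-(5 * N - 3 : ℝ)) (4 * N * (N - 1)) = √d * √d := by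
    rw [Real.mul_self_sqrt hd.le, discrim]
    ring
  have hfactor := X_sq_sub_C_mul_X_add_C_eq_mul hdiscrim
  set r₁ := (5 * N - 3 + √d) / 2
  set r₂ := (5 * N - 3 - √d) / 2
  have hr : r₁ ≠ r₂ := by
    have hsub : r₁ - r₂ = √d := by simp only [r₁, r₂]; ring
    rw [← sub_ne_zero, hsub]
    exact (Real.sqrt_pos.mpr hd).ne'
  have hroot : (2 * N - 3 - r₁) * (2 * N - 3 - r₂) ≠ 0 := by
    have heval := congrArg (eval (2 * N - 3 : ℝ)) hfactor
    simp only [eval_add, eval_sub, eval_mul, eval_pow, eval_X, eval_C] at heval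
    rw [← heval, show (2 * N - 3 : ℝ) ^ 2 - (5 * N - 3) * (2 * N - 3) + 4 * N * (N - 1) =
      N * (5 - 2 * N) by ring]
    have h5 : (5 : ℝ) - 2 * N ≠ 0 := by
      rw [sub_ne_zero]
      exact_mod_cast (by omega : 5 ≠ 2 * N)
    exact mul_ne_zero (by positivity) h5
  rw [hfactor]
  simp only [rootMultiplicity_X_sub_C_pow_mul_X_sub_C_mul_X_sub_C_s12]
  have h₁ : (2 * N - 3 : ℝ) ≠ r₁ := sub_ne_zero.mp (left_ne_zero_of_mul hroot)
  have h₂ : (2 * N - 3 : ℝ) ≠ r₂ := sub_ne_zero.mp (right_ne_zero_of_mul hroot)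
  simp [hr, hr.symm, h₁, h₂, h₁.symm, h₂.symm]

end starGraph

theorem quasidihedral_cocentralizer_distance_signless_laplacian_spectrum (n : ℕ) (hn : 4 ≤ n) :
    (distSignlessLapMatrix (starGraph (2 ^ (n - 2)))).charpoly.rootMultiplicity
      ((2 : ℝ) ^ (n - 1) - 3) = 2 ^ (n - 2) - 1 ∧
    (distSignlessLapMatrix (starGraph (2 ^ (n - 2)))).charpoly.rootMultiplicity
      ((1 / 2) * ((5 * (2 : ℝ) ^ (n - 2) - 3) +
        Real.sqrt (9 * (2 : ℝ) ^ (2 * n - 4) - 14 * 2 ^ (n - 2) + 9))) = 1 ∧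
    (distSignlessLapMatrix (starGraph (2 ^ (n - 2)))).charpoly.rootMultiplicity
      ((1 / 2) * ((5 * (2 : ℝ) ^ (n - 2) - 3) -
        Real.sqrt (9 * (2 : ℝ) ^ (2 * n - 4) - 14 * 2 ^ (n - 2) + 9))) = 1 := by
  have hcast : ((2 ^ (n - 2) : ℕ) : ℝ) = 2 ^ (n - 2) := by norm_num
  have hcenter : (2 : ℝ) ^ (n - 1) = 2 * 2 ^ (n - 2) := by
    rw [← pow_succ']
    congr 1
    omega
  have hsq : (2 : ℝ) ^ (2 * n - 4) = (2 ^ (n - 2)) ^ 2 := by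
    rw [← pow_mul]
    congr 1
    omega
  rw [hcenter, hsq, ← hcast]
  exact starGraph.rootMultiplicity_charpoly_distSignlessLapMatrix Nat.one_le_two_pow
end

section
/- Let k ≥ 2 and let T_k be the complete tripartite graph K_{2^k+1, 2^{k-1}(2^k+1), 2^{k-1}(2^k-1)}. The characteristic polynomial of the distance matrix of T_k equals (λ+2)^{2^{2k}+2^k-2} · [λ³ + (4 − 2^{2k+1} − 2^{k+1})λ² + (4 + 3·2^{4k-2} + 3·2^{3k} − 23·2^{2k-2} − 2^{k+3})λ + (−2^{5k} + 2^{4k-1} + 7·2^{3k} − 5·2^{2k-1} − 2^{k+3})]. Consequently, the distance spectrum of T_k consists of −2 with multiplicity 2^{2k}+2^k−2 together with the three roots of the displayed cubic. -/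
open Polynomial

/-- The part of a vertex of `Fin a ⊕ Fin b ⊕ Fin c`. -/
def tripart {a b c : ℕ} : Fin a ⊕ Fin b ⊕ Fin c → Fin 3
  | Sum.inl _ => 0
  | Sum.inr (Sum.inl _) => 1
  | Sum.inr (Sum.inr _) => 2

/-- The complete tripartite graph `K_{a,b,c}`. -/
def completeTripartiteGraph (a b c : ℕ) : SimpleGraph (Fin a ⊕ Fin b ⊕ Fin c) where
  Adj u v := tripart u ≠ tripart v
  symm := ⟨fun _ _ h => h.symm⟩
  loopless := ⟨fun _ h => h rfl⟩

/-- The co-centralizer graph of `PSL(2, 2^k)`: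
the complete tripartite graph `K_{2^k+1, 2^{k-1}(2^k+1), 2^{k-1}(2^k-1)}`. -/
def pslGraph (k : ℕ) :=
  completeTripartiteGraph (2 ^ k + 1) (2 ^ (k - 1) * (2 ^ k + 1)) (2 ^ (k - 1) * (2 ^ k - 1))

/-!
Two distinct vertices of `K_{a,b,c}` are at distance 2 when they lie in the same part and at
distance 1 otherwise, so `D + 2I = U W`, where `U` is the `n × 3` part-indicator matrix and the
`i`-th row of the `3 × n` matrix `W` is `2` on part `i` and `1` elsewhere. Since `UW` and `WU` have
the same characteristic polynomial up to a factor `λ ^ (n - 3)`, we get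
`χ_D(λ) = (λ + 2) ^ (n - 3) · χ_B(λ + 2)` with `B = WU` the `3 × 3` quotient matrix. Moreover
`χ_B(0) = -4abc ≠ 0`, so `-2` is a root of multiplicity exactly `n - 3`. For `T_k` one substitutes
`a = q + 1`, `b = q(q + 1)/2`, `c = q(q - 1)/2` with `q = 2^k`.
-/

open Matrix

section CompleteTripartite

variable {a b c : ℕ}

lemma exists_tripart_ne (ha : 0 < a) (hb : 0 < b) (i : Fin 3) :
    ∃ w : Fin a ⊕ Fin b ⊕ Fin c, tripart w ≠ i := by
  by_cases h : i = 0
  · exact ⟨Sum.inr (Sum.inl ⟨0, hb⟩), by simp [tripart, h]⟩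
  · exact ⟨Sum.inl ⟨0, ha⟩, Ne.symm h⟩

lemma completeTripartiteGraph_dist (ha : 0 < a) (hb : 0 < b) (u v : Fin a ⊕ Fin b ⊕ Fin c) :
    (completeTripartiteGraph a b c).dist u v =
      if u = v then 0 else if tripart u = tripart v then 2 else 1 := by
  split_ifs with huv hpart
  · simp [huv]
  · obtain ⟨w, hw⟩ := exists_tripart_ne ha hb (tripart u)
    have huw : (completeTripartiteGraph a b c).Adj u w := fun h => hw h.symm
    have hwv : (completeTripartiteGraph a b c).Adj w v := fun h => hw (h.trans hpart.symm)
    have hle := SimpleGraph.dist_le (.cons huw (.cons hwv .nil))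
    have h0 := SimpleGraph.dist_ne_zero_iff_ne_and_reachable.mpr
      ⟨huv, huw.reachable.trans hwv.reachable⟩
    have h1 : (completeTripartiteGraph a b c).dist u v ≠ 1 :=
      fun h => SimpleGraph.dist_eq_one_iff_adj.mp h hpart
    simp only [SimpleGraph.Walk.length_cons, SimpleGraph.Walk.length_nil] at hle
    omega
  · exact SimpleGraph.dist_eq_one_iff_adj.mpr hpart

variable (a b c)

noncomputable def tripartIndicator : Matrix (Fin a ⊕ Fin b ⊕ Fin c) (Fin 3) ℝ :=
  of fun u i => if tripart u = i then 1 else 0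

noncomputable def tripartDistRow : Matrix (Fin 3) (Fin a ⊕ Fin b ⊕ Fin c) ℝ :=
  of fun i v => if tripart v = i then 2 else 1

variable {a b c}

lemma distMatrix_completeTripartiteGraph (ha : 0 < a) (hb : 0 < b) :
    distMatrix (completeTripartiteGraph a b c) =
      tripartIndicator a b c * tripartDistRow a b c - scalar _ 2 := by
  ext u v
  simp only [distMatrix, completeTripartiteGraph_dist ha hb, tripartIndicator, tripartDistRow,
    Matrix.sub_apply, mul_apply, of_apply, ite_mul, one_mul, zero_mul, Finset.sum_ite_eq,
    Finset.mem_univ, if_true, scalar_apply, diagonal_apply]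
  split_ifs <;> simp_all

end CompleteTripartite

def tripartQuotient {R : Type*} [CommRing R] (x y z : R) : Matrix (Fin 3) (Fin 3) R :=
  !![2 * x, y, z; x, 2 * y, z; x, y, 2 * z]

lemma tripartDistRow_mul_tripartIndicator (a b c : ℕ) :
    tripartDistRow a b c * tripartIndicator a b c = tripartQuotient (a : ℝ) b c := by
  ext i j
  simp only [mul_apply, Fintype.sum_sum_type, tripartDistRow, tripartIndicator, tripartQuotient,
    of_apply, tripart]
  fin_cases i <;> fin_cases j <;> simp <;> ring

section TripartQuotient

variable {R : Type*} [CommRing R] (x y z : R)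

lemma charpoly_tripartQuotient :
    (tripartQuotient x y z).charpoly =
      X ^ 3 - C (2 * (x + y + z)) * X ^ 2 + C (3 * (x * y + x * z + y * z)) * X -
        C (4 * x * y * z) := by
  simp [tripartQuotient, charpoly, det_fin_three, map_ofNat]
  ring

lemma eval_zero_charpoly_tripartQuotient :
    (tripartQuotient x y z).charpoly.eval 0 = -(4 * x * y * z) := by
  simp [charpoly_tripartQuotient]

end TripartQuotient

theorem completeTripartiteGraph_distMatrix_charpoly {a b c : ℕ} (ha : 0 < a) (hb : 0 < b)
    (habc : 3 ≤ a + b + c) :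
    (distMatrix (completeTripartiteGraph a b c)).charpoly =
      (X + C 2) ^ (a + b + c - 3) * (tripartQuotient (a : ℝ) b c).charpoly.comp (X + C 2) := by
  have hcard : Fintype.card (Fin a ⊕ Fin b ⊕ Fin c) = a + b + c := by simp [add_assoc]
  rw [distMatrix_completeTripartiteGraph ha hb, charpoly_sub_scalar,
    charpoly_mul_comm_of_le _ _ (by simpa [hcard] using habc),
    tripartDistRow_mul_tripartIndicator, hcard, Fintype.card_fin, mul_comp, pow_comp, X_comp]

section RootsOfFactorization

variable {R : Type*} [CommRing R] {q : R[X]} {x : R} (n : ℕ)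

lemma rootMultiplicity_X_sub_C_pow_mul (hq : ¬ q.IsRoot x) :
    ((X - C x) ^ n * q).rootMultiplicity x = n := by
  have hq0 : q ≠ 0 := by rintro rfl; exact hq (by simp)
  rw [mul_comm, rootMultiplicity_mul_X_sub_C_pow hq0, rootMultiplicity_eq_zero hq, zero_add]

lemma isRoot_X_sub_C_pow_mul_iff [IsDomain R] {y : R} (hy : y ≠ x) :
    ((X - C x) ^ n * q).IsRoot y ↔ q.IsRoot y := by
  simp [IsRoot, sub_eq_zero, hy]

end RootsOfFactorization

lemma two_pow_mul_sub {k m r : ℕ} (h : r ≤ m * k) :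
    (2 : ℝ) ^ (m * k - r) = (2 ^ k) ^ m / 2 ^ r := by
  rw [pow_sub₀ _ two_ne_zero h, pow_mul', div_eq_mul_inv]

section PSL

variable {k : ℕ}

noncomputable def pslDistanceCubic (k : ℕ) : ℝ[X] :=
  X ^ 3 + C (4 - (2 : ℝ) ^ (2 * k + 1) - 2 ^ (k + 1)) * X ^ 2 +
    C (4 + 3 * (2 : ℝ) ^ (4 * k - 2) + 3 * 2 ^ (3 * k) - 23 * 2 ^ (2 * k - 2) - 2 ^ (k + 3)) * X +
    C (-(2 : ℝ) ^ (5 * k) + 2 ^ (4 * k - 1) + 7 * 2 ^ (3 * k) - 5 * 2 ^ (2 * k - 1) - 2 ^ (k + 3))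

lemma pslDistanceCubic_eq_comp (hk : 1 ≤ k) :
    pslDistanceCubic k =
      (tripartQuotient ((2 ^ k + 1 : ℕ) : ℝ) ((2 ^ (k - 1) * (2 ^ k + 1) : ℕ) : ℝ)
        ((2 ^ (k - 1) * (2 ^ k - 1) : ℕ) : ℝ)).charpoly.comp (X + C 2) := by
  refine Polynomial.funext fun r => ?_
  have hcast : ((2 ^ k - 1 : ℕ) : ℝ) = 2 ^ k - 1 := by
    rw [Nat.cast_sub Nat.one_le_two_pow]; norm_num
  simp only [pslDistanceCubic, charpoly_tripartQuotient, eval_comp, Nat.cast_mul, hcast]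
  simp only [eval_add, eval_sub, eval_mul, eval_pow, eval_C, eval_X]
  push_cast
  rw [pow_sub₀ _ two_ne_zero hk, two_pow_mul_sub (by omega : 2 ≤ 4 * k),
    two_pow_mul_sub (by omega : 2 ≤ 2 * k), two_pow_mul_sub (by omega : 1 ≤ 4 * k),
    two_pow_mul_sub (by omega : 1 ≤ 2 * k)]
  simp only [pow_add, pow_mul']
  ring

lemma pslDistanceCubic_not_isRoot_neg_two (hk : 1 ≤ k) : ¬ (pslDistanceCubic k).IsRoot (-2) := by
  have hc : (0 : ℝ) < ((2 ^ (k - 1) * (2 ^ k - 1) : ℕ) : ℝ) := by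
    exact_mod_cast Nat.mul_pos (by positivity) (Nat.sub_pos_of_lt (Nat.one_lt_two_pow (by omega)))
  rw [pslDistanceCubic_eq_comp hk, IsRoot, eval_comp, eval_add, eval_X, eval_C, neg_add_cancel,
    eval_zero_charpoly_tripartQuotient, neg_eq_zero]
  exact (mul_pos (by positivity) hc).ne'

lemma pslGraph_distMatrix_charpoly (hk : 1 ≤ k) :
    (distMatrix (pslGraph k)).charpoly =
      (X - C (-2)) ^ (2 ^ (2 * k) + 2 ^ k - 2) * pslDistanceCubic k := by
  have hone : 1 ≤ 2 ^ k := Nat.one_le_two_pow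
  have hone' : 1 ≤ 2 ^ (2 * k) := Nat.one_le_two_pow
  have hbc : 2 ^ (k - 1) * (2 ^ k + 1) + 2 ^ (k - 1) * (2 ^ k - 1) = 2 ^ (2 * k) := by
    rw [← mul_add, show 2 ^ k + 1 + (2 ^ k - 1) = 2 * 2 ^ k by omega, ← mul_assoc,
      ← pow_succ, Nat.sub_add_cancel hk, two_mul, pow_add]
  have h3 : 3 ≤ 2 ^ k + 1 + 2 ^ (k - 1) * (2 ^ k + 1) + 2 ^ (k - 1) * (2 ^ k - 1) := by
    rw [add_assoc, hbc]; omega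
  have hcard : 2 ^ k + 1 + 2 ^ (k - 1) * (2 ^ k + 1) + 2 ^ (k - 1) * (2 ^ k - 1) - 3 =
      2 ^ (2 * k) + 2 ^ k - 2 := by
    rw [add_assoc, hbc]; omega
  rw [pslGraph, completeTripartiteGraph_distMatrix_charpoly (by positivity) (by positivity) h3,
    hcard, pslDistanceCubic_eq_comp hk, map_neg, sub_neg_eq_add]

end PSL

theorem psl_cocentralizer_distance_charpoly (k : ℕ) (hk : 2 ≤ k) :
    (distMatrix (pslGraph k)).charpoly =
      (X + C 2) ^ (2 ^ (2 * k) + 2 ^ k - 2) *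
        (X ^ 3 + C (4 - (2 : ℝ) ^ (2 * k + 1) - 2 ^ (k + 1)) * X ^ 2 +
          C (4 + 3 * (2 : ℝ) ^ (4 * k - 2) + 3 * 2 ^ (3 * k) - 23 * 2 ^ (2 * k - 2) -
            2 ^ (k + 3)) * X +
          C (-(2 : ℝ) ^ (5 * k) + 2 ^ (4 * k - 1) + 7 * 2 ^ (3 * k) - 5 * 2 ^ (2 * k - 1) -
            2 ^ (k + 3))) ∧
    (distMatrix (pslGraph k)).charpoly.rootMultiplicity (-2) = 2 ^ (2 * k) + 2 ^ k - 2 ∧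
    ∀ μ : ℝ, μ ≠ -2 →
      ((distMatrix (pslGraph k)).charpoly.IsRoot μ ↔
        μ ^ 3 + (4 - (2 : ℝ) ^ (2 * k + 1) - 2 ^ (k + 1)) * μ ^ 2 +
          (4 + 3 * (2 : ℝ) ^ (4 * k - 2) + 3 * 2 ^ (3 * k) - 23 * 2 ^ (2 * k - 2) -
            2 ^ (k + 3)) * μ +
          (-(2 : ℝ) ^ (5 * k) + 2 ^ (4 * k - 1) + 7 * 2 ^ (3 * k) - 5 * 2 ^ (2 * k - 1) -
            2 ^ (k + 3)) = 0) := by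
  have hk₁ : 1 ≤ k := by omega
  have hD := pslGraph_distMatrix_charpoly hk₁
  refine ⟨?_, ?_, fun μ hμ => ?_⟩
  · rw [hD, map_neg, sub_neg_eq_add]
    rfl
  · rw [hD, rootMultiplicity_X_sub_C_pow_mul _ (pslDistanceCubic_not_isRoot_neg_two hk₁)]
  · rw [hD, isRoot_X_sub_C_pow_mul_iff _ hμ, IsRoot, pslDistanceCubic]
    simp only [eval_add, eval_mul, eval_pow, eval_C, eval_X]
end
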